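/- arXiv:1711.01574 — 11 statements merged into one kernel-verified Lean document; each statement's English description precedes it below -/
import Mathlib

section
/- Let X be a set of feasible evaluations and let f̄ = (f_1,…,f_m) be a binary aggregator for X. If uu'_k → vv'_l is a directed edge of the graph H_X and f_k(u,u') = u, then f_l(v,v') = v. -/
/-- An `n`-ary aggregator for a set `X` of feasible evaluations: an `m`-tuple of
conservative operations that, applied column-wise, maps tuples of elements of `X`
into `X`. -/
def IsAggregator {m : ℕ} {A : Fin m → Type*} {n : ℕ} (X : Set (∀ j, A j))
    (f : ∀ j, (Fin n → A j) → A j) : Prop :=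
  (∀ j (x : Fin n → A j), ∃ i, f j x = x i) ∧
  (∀ xs : Fin n → (∀ j, A j), (∀ i, xs i ∈ X) → (fun j => f j (fun i => xs i j)) ∈ X)

/-- Vertices of the graph `H_X`: pairs of distinct elements of the `j`-th projection of `X`. -/
def IsVertex {m : ℕ} {A : Fin m → Type*} (X : Set (∀ j, A j)) (p : Σ j, A j × A j) : Prop :=
  p.2.1 ≠ p.2.2 ∧ (∃ z ∈ X, z p.1 = p.2.1) ∧ (∃ z ∈ X, z p.1 = p.2.2)

/-- The directed edge relation of the graph `H_X`. -/
def HEdge {m : ℕ} {A : Fin m → Type*} (X : Set (∀ j, A j)) (p q : Σ j, A j × A j) : Prop :=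
  IsVertex X p ∧ IsVertex X q ∧ p.1 ≠ q.1 ∧
  ∃ z ∈ X, ∃ z' ∈ X,
    z p.1 = p.2.1 ∧ z q.1 = q.2.1 ∧ z' p.1 = p.2.2 ∧ z' q.1 = q.2.2 ∧
    ¬ ∃ y ∈ X, y p.1 = p.2.1 ∧ y q.1 = q.2.2 ∧ ∀ i, y i = z i ∨ y i = z' i

/-- If `uu'_k → vv'_l` is an edge of `H_X`, `f̄` is a binary aggregator for `X`, and
`f_k(u,u') = u`, then `f_l(v,v') = v`. -/
theorem statement_0 {m : ℕ} (hm : 1 ≤ m) {A : Fin m → Type*} [∀ j, Fintype (A j)]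
    (hA : ∀ j, 2 ≤ Fintype.card (A j))
    (X : Set (∀ j, A j)) (hX : ∀ j, ∃ z ∈ X, ∃ z' ∈ X, z j ≠ z' j)
    (f : ∀ j, (Fin 2 → A j) → A j) (hf : IsAggregator X f)
    {k l : Fin m} {u u' : A k} {v v' : A l}
    (hedge : HEdge X ⟨k, (u, u')⟩ ⟨l, (v, v')⟩)
    (hku : f k ![u, u'] = u) :
    f l ![v, v'] = v := by
  obtain ⟨hcons, hclosed⟩ := hf
  obtain ⟨hp, hq, hne, z, hz, z', hz', hzk, hzl, hz'k, hz'l, hno⟩ := hedge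
  simp only at hzk hzl hz'k hz'l hno
  set y : ∀ j, A j := fun j => f j ![z j, z' j] with hy
  have hyX : y ∈ X := by
    have := hclosed ![z, z'] (by
      intro i; fin_cases i <;> simpa)
    convert this using 1
    funext j
    simp [hy]
    congr 1
    funext i
    fin_cases i <;> simp
  have hyk : y k = u := by
    simp only [hy, hzk, hz'k, hku]
  have hcons' : ∀ j, y j = z j ∨ y j = z' j := by
    intro j
    obtain ⟨i, hi⟩ := hcons j ![z j, z' j]
    fin_cases i
    · left; simpa using hi
    · right; simpa using hi
  rcases hcons' l with hl | hl
  · simp only [hy, hzl, hz'l] at hl; exact hl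
  · exfalso
    apply hno
    refine ⟨y, hyX, hyk, ?_, hcons'⟩
    simp only [hy, hzl, hz'l] at hl ⊢; exact hl
end

section
/- Let X be a set of feasible evaluations and let f̄ = (f_1,…,f_m) be a binary aggregator for X. If there is a directed path in the graph H_X from the vertex uu'_k to the vertex vv'_l and f_k(u,u') = u, then f_l(v,v') = v. -/
lemma edge_step {m : ℕ} {A : Fin m → Type*} {X : Set (∀ j, A j)}
    {f : ∀ j, (Fin 2 → A j) → A j} (hf : IsAggregator X f)
    {p q : Σ j, A j × A j} (he : HEdge X p q)
    (hp : f p.1 ![p.2.1, p.2.2] = p.2.1) : f q.1 ![q.2.1, q.2.2] = q.2.1 := by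
  obtain ⟨_, hvq, hne, z, hz, z', hz', hzp, hzq, hz'p, hz'q, hno⟩ := he
  set y : ∀ j, A j := fun j => f j ![z j, z' j] with hy
  have hyX : y ∈ X := by
    have := hf.2 ![z, z'] (by intro i; fin_cases i <;> simpa)
    convert this using 1
    funext j
    simp only [hy]
    congr 1
    funext i
    fin_cases i <;> simp
  have hcons : ∀ j, y j = z j ∨ y j = z' j := by
    intro j
    obtain ⟨i, hi⟩ := hf.1 j ![z j, z' j]
    fin_cases i
    · left; simpa [hy] using hi
    · right; simpa [hy] using hi
  have hyp : y p.1 = p.2.1 := by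
    have : (![z p.1, z' p.1] : Fin 2 → A p.1) = ![p.2.1, p.2.2] := by
      rw [hzp, hz'p]
    simp only [hy, this, hp]
  have hyq : y q.1 = z q.1 ∨ y q.1 = z' q.1 := hcons q.1
  rcases hyq with h | h
  · have : (![z q.1, z' q.1] : Fin 2 → A q.1) = ![q.2.1, q.2.2] := by
      rw [hzq, hz'q]
    rw [← this]
    exact h.trans hzq
  · exfalso
    exact hno ⟨y, hyX, hyp, by rw [h, hz'q], hcons⟩

/-- If there is a directed path in `H_X` from `uu'_k` to `vv'_l`, `f̄` is a binary
aggregator for `X`, and `f_k(u,u') = u`, then `f_l(v,v') = v`. -/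
theorem statement_1 {m : ℕ} (hm : 1 ≤ m) {A : Fin m → Type*} [∀ j, Fintype (A j)]
    (hA : ∀ j, 2 ≤ Fintype.card (A j))
    (X : Set (∀ j, A j)) (hX : ∀ j, ∃ z ∈ X, ∃ z' ∈ X, z j ≠ z' j)
    (f : ∀ j, (Fin 2 → A j) → A j) (hf : IsAggregator X f)
    {k l : Fin m} {u u' : A k} {v v' : A l}
    (hpath : Relation.TransGen (HEdge X) ⟨k, (u, u')⟩ ⟨l, (v, v')⟩)
    (hku : f k ![u, u'] = u) :
    f l ![v, v'] = v := by
  have key : ∀ q : Σ j, A j × A j, Relation.TransGen (HEdge X) ⟨k, (u, u')⟩ q →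
      f q.1 ![q.2.1, q.2.2] = q.2.1 := by
    intro q hq
    induction hq with
    | single h => exact edge_step hf h hku
    | tail _ h ih => exact edge_step hf h ih
  exact key ⟨l, (v, v')⟩ hpath
end

section
/- Let X be a set of feasible evaluations. If the directed graph H_X is strongly connected, then every binary aggregator f̄ = (f_1,…,f_m) for X is dictatorial on X, i.e., there is d ∈ {1,2} such that for all z, z' ∈ X and all j ∈ {1,…,m}, f_j(z_j, z'_j) equals the j-th coordinate of the d-th argument. -/
/-- An edge propagates the property of "picking the first component". -/
lemma edge_prop {m : ℕ} {A : Fin m → Type*} (X : Set (∀ j, A j))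
    (f : ∀ j, (Fin 2 → A j) → A j) (hf : IsAggregator X f)
    {p q : Σ j, A j × A j} (h : HEdge X p q)
    (hp : f p.1 ![p.2.1, p.2.2] = p.2.1) : f q.1 ![q.2.1, q.2.2] = q.2.1 := by
  obtain ⟨hvp, hvq, hne, z, hz, z', hz', hzp, hzq, hz'p, hz'q, hno⟩ := h
  set y : ∀ j, A j := fun i => f i ![z i, z' i] with hy
  have hyX : y ∈ X := by
    have h2 := hf.2 ![z, z'] (by intro i; fin_cases i <;> simpa)
    have he : (fun j => f j (fun i => ![z, z'] i j)) = y := by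
      funext j
      congr 1
      funext i
      fin_cases i <;> simp
    rwa [he] at h2
  have hcons : ∀ j, y j = z j ∨ y j = z' j := by
    intro j
    obtain ⟨i, hi⟩ := hf.1 j ![z j, z' j]
    fin_cases i
    · left; simpa using hi
    · right; simpa using hi
  have hyp : y p.1 = p.2.1 := by
    show f p.1 ![z p.1, z' p.1] = p.2.1
    rw [hzp, hz'p, hp]
  have hyq : y q.1 = q.2.1 ∨ y q.1 = q.2.2 := by
    rcases hcons q.1 with h' | h'
    · left; rw [h', hzq]
    · right; rw [h', hz'q]
  rcases hyq with h' | h'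
  · have h'' : f q.1 ![z q.1, z' q.1] = q.2.1 := h'
    rwa [hzq, hz'q] at h''
  · exact absurd ⟨y, hyX, hyp, h', hcons⟩ hno
lemma trans_prop {m : ℕ} {A : Fin m → Type*} (X : Set (∀ j, A j))
    (f : ∀ j, (Fin 2 → A j) → A j) (hf : IsAggregator X f)
    {p q : Σ j, A j × A j} (h : Relation.TransGen (HEdge X) p q)
    (hp : f p.1 ![p.2.1, p.2.2] = p.2.1) : f q.1 ![q.2.1, q.2.2] = q.2.1 := by
  induction h with
  | single h => exact edge_prop X f hf h hp
  | tail _ h ih => exact edge_prop X f hf h ih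

/-- If `H_X` is strongly connected, then every binary aggregator for `X` is
dictatorial on `X`. -/
theorem statement_2 {m : ℕ} (hm : 1 ≤ m) {A : Fin m → Type*} [∀ j, Fintype (A j)]
    (hA : ∀ j, 2 ≤ Fintype.card (A j))
    (X : Set (∀ j, A j)) (hX : ∀ j, ∃ z ∈ X, ∃ z' ∈ X, z j ≠ z' j)
    (hconn : ∀ p q, IsVertex X p → IsVertex X q → p ≠ q → Relation.TransGen (HEdge X) p q)
    (f : ∀ j, (Fin 2 → A j) → A j) (hf : IsAggregator X f) :
    ∃ d : Fin 2, ∀ z ∈ X, ∀ z' ∈ X, ∀ j, f j ![z j, z' j] = ![z j, z' j] d := by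
  obtain ⟨z0, hz0, z0', hz0', hne0⟩ := hX ⟨0, hm⟩
  set j0 : Fin m := ⟨0, hm⟩ with hj0
  set p0 : Σ j, A j × A j := ⟨j0, (z0 j0, z0' j0)⟩ with hp0
  have hvp0 : IsVertex X p0 := ⟨hne0, ⟨z0, hz0, rfl⟩, ⟨z0', hz0', rfl⟩⟩
  by_cases hd : f p0.1 ![p0.2.1, p0.2.2] = p0.2.1
  · refine ⟨0, ?_⟩
    intro z hz z' hz' j
    by_cases hzz : z j = z' j
    · obtain ⟨i, hi⟩ := hf.1 j ![z j, z' j]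
      fin_cases i <;> simp_all
    · have hq : IsVertex X ⟨j, (z j, z' j)⟩ := ⟨hzz, ⟨z, hz, rfl⟩, ⟨z', hz', rfl⟩⟩
      by_cases hpq : p0 = ⟨j, (z j, z' j)⟩
      · rw [hpq] at hd
        simpa using hd
      · have := trans_prop X f hf (hconn p0 ⟨j, (z j, z' j)⟩ hvp0 hq hpq) hd
        simpa using this
  · refine ⟨1, ?_⟩
    intro z hz z' hz' j
    by_cases hzz : z j = z' j
    · obtain ⟨i, hi⟩ := hf.1 j ![z j, z' j]
      fin_cases i <;> simp_all
    · have hq : IsVertex X ⟨j, (z j, z' j)⟩ := ⟨hzz, ⟨z, hz, rfl⟩, ⟨z', hz', rfl⟩⟩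
      by_cases hfq : f j ![z j, z' j] = z j
      · exfalso
        by_cases hpq : (⟨j, (z j, z' j)⟩ : Σ j, A j × A j) = p0
        · rw [← hpq] at hd
          exact hd (by simpa using hfq)
        · exact hd (trans_prop X f hf (hconn ⟨j, (z j, z' j)⟩ p0 hq hvp0 hpq)
            (by simpa using hfq))
      · obtain ⟨i, hi⟩ := hf.1 j ![z j, z' j]
        show f j ![z j, z' j] = z' j
        fin_cases i
        · exact absurd (by simpa using hi) hfq
        · simpa using hi
end

section
/- Let X be a set of feasible evaluations. If the directed graph H_X is not strongly connected, then X admits a binary non-dictatorial aggregator, i.e., a binary aggregator f̄ = (f_1,…,f_m) for which there is no d ∈ {1,2} such that for all z, z' ∈ X and all j ∈ {1,…,m}, f_j(z_j, z'_j) equals the j-th coordinate of the d-th argument. -/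
open Classical in
/-- The coordinatewise combination of `z` and `z'` determined by a set `S` of vertices:
take the first value if the pair is in `S` (or the values agree), else the second. -/
noncomputable def Wfun {m : ℕ} {A : Fin m → Type*} (S : Set (Σ j, A j × A j))
    (z z' : ∀ j, A j) : ∀ j, A j :=
  fun j => if z j = z' j ∨ (⟨j, (z j, z' j)⟩ : Σ j, A j × A j) ∈ S then z j else z' j

open Classical in
theorem Wfun_apply {m : ℕ} {A : Fin m → Type*} (S : Set (Σ j, A j × A j))
    (z z' : ∀ j, A j) (j : Fin m) :
    Wfun S z z' j =
      if z j = z' j ∨ (⟨j, (z j, z' j)⟩ : Σ j, A j × A j) ∈ S then z j else z' j := rfl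

open Classical in
private theorem key {m : ℕ} {A : Fin m → Type*} (X : Set (∀ j, A j))
    (S : Set (Σ j, A j × A j))
    (hS : ∀ a b, a ∈ S → HEdge X a b → b ∈ S) :
    ∀ (n : ℕ) (z z' : ∀ j, A j), z ∈ X → z' ∈ X →
      (Finset.univ.filter (fun j => z j ≠ z' j)).card ≤ n →
      Wfun S z z' ∈ X := by
  intro n
  induction n with
  | zero =>
    intro z z' hz hz' hcard
    have hall : ∀ j, z j = z' j := by
      intro j
      by_contra h
      have hmem : j ∈ Finset.univ.filter (fun j => z j ≠ z' j) := by
        simp [h]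
      have := Finset.card_pos.mpr ⟨j, hmem⟩
      omega
    have : Wfun S z z' = z := by
      funext j
      rw [Wfun_apply, if_pos (Or.inl (hall j))]
    rwa [this]
  | succ n ih =>
    intro z z' hz hz' hcard
    by_cases hallS : ∀ j, z j ≠ z' j → (⟨j, (z j, z' j)⟩ : Σ j, A j × A j) ∈ S
    · have : Wfun S z z' = z := by
        funext j
        by_cases h : z j = z' j
        · rw [Wfun_apply, if_pos (Or.inl h)]
        · rw [Wfun_apply, if_pos (Or.inr (hallS j h))]
      rwa [this]
    by_cases hnoneS : ∀ j, z j ≠ z' j → (⟨j, (z j, z' j)⟩ : Σ j, A j × A j) ∉ S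
    · have : Wfun S z z' = z' := by
        funext j
        by_cases h : z j = z' j
        · rw [Wfun_apply, if_pos (Or.inl h)]; exact h
        · rw [Wfun_apply, if_neg]
          push_neg
          exact ⟨h, hnoneS j h⟩
      rwa [this]
    push_neg at hallS hnoneS
    obtain ⟨l, hl, hlS⟩ := hallS
    obtain ⟨k, hk, hkS⟩ := hnoneS
    have hkl : k ≠ l := by
      intro h
      subst h
      exact hlS hkS
    have hVk : IsVertex X ⟨k, (z k, z' k)⟩ := ⟨hk, ⟨z, hz, rfl⟩, ⟨z', hz', rfl⟩⟩
    have hVl : IsVertex X ⟨l, (z l, z' l)⟩ := ⟨hl, ⟨z, hz, rfl⟩, ⟨z', hz', rfl⟩⟩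
    have hnedge : ¬ HEdge X ⟨k, (z k, z' k)⟩ ⟨l, (z l, z' l)⟩ := by
      intro h
      exact hlS (hS _ _ hkS h)
    have hrep : ∃ y ∈ X, y k = z k ∧ y l = z' l ∧ ∀ i, y i = z i ∨ y i = z' i := by
      by_contra hcon
      exact hnedge ⟨hVk, hVl, hkl, z, hz, z', hz', rfl, rfl, rfl, rfl, hcon⟩
    obtain ⟨Y, hY, hYk, hYl, hYc⟩ := hrep
    have hkmem : k ∈ Finset.univ.filter (fun j => z j ≠ z' j) := by simp [hk]
    have hlmem : l ∈ Finset.univ.filter (fun j => z j ≠ z' j) := by simp [hl]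
    -- first application of IH: pair (z, Y)
    have hu : Wfun S z Y ∈ X := by
      apply ih z Y hz hY
      have hsub : Finset.univ.filter (fun j => z j ≠ Y j) ⊆
          (Finset.univ.filter (fun j => z j ≠ z' j)).erase k := by
        intro j hj
        rw [Finset.mem_filter] at hj
        rw [Finset.mem_erase]
        constructor
        · intro h
          subst h
          exact hj.2 hYk.symm
        · rw [Finset.mem_filter]
          refine ⟨Finset.mem_univ _, ?_⟩
          rcases hYc j with h | h
          · exact absurd h.symm hj.2
          · intro he
            exact hj.2 (he.trans h.symm)
      have h1 := Finset.card_le_card hsub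
      have h2 := Finset.card_erase_of_mem hkmem
      have h3 := Finset.card_pos.mpr ⟨k, hkmem⟩
      omega
    -- second application of IH: pair (Wfun S z Y, z')
    have hv : Wfun S (Wfun S z Y) z' ∈ X := by
      apply ih _ z' hu hz'
      have hsub : Finset.univ.filter (fun j => Wfun S z Y j ≠ z' j) ⊆
          (Finset.univ.filter (fun j => z j ≠ z' j)).erase l := by
        intro j hj
        rw [Finset.mem_filter] at hj
        rw [Finset.mem_erase]
        constructor
        · intro h
          subst h
          have hwl : Wfun S z Y j = z' j := by
            rw [Wfun_apply, hYl, if_neg]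
            push_neg
            exact ⟨hl, hlS⟩
          exact hj.2 hwl
        · rw [Finset.mem_filter]
          refine ⟨Finset.mem_univ _, ?_⟩
          intro he
          have hYj : Y j = z j := by
            rcases hYc j with h | h
            · exact h
            · exact h.trans he.symm
          have : Wfun S z Y j = z j := by
            rw [Wfun_apply, if_pos (Or.inl hYj.symm)]
          exact hj.2 (this.trans he)
      have h1 := Finset.card_le_card hsub
      have h2 := Finset.card_erase_of_mem hlmem
      have h3 := Finset.card_pos.mpr ⟨l, hlmem⟩
      omega
    -- the composed value is exactly Wfun S z z'
    have heq : Wfun S (Wfun S z Y) z' = Wfun S z z' := by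
      funext j
      by_cases h0 : z j = z' j
      · have hYj : Y j = z j := by
          rcases hYc j with h | h
          · exact h
          · exact h.trans h0.symm
        have huj : Wfun S z Y j = z j := by
          rw [Wfun_apply, if_pos (Or.inl hYj.symm)]
        rw [Wfun_apply, huj, Wfun_apply]
      · rcases hYc j with hy | hy
        · have huj : Wfun S z Y j = z j := by
            rw [Wfun_apply, if_pos (Or.inl hy.symm)]
          rw [Wfun_apply, huj, Wfun_apply]
        · have huj : Wfun S z Y j = Wfun S z z' j := by
            rw [Wfun_apply, Wfun_apply, hy]
          rw [Wfun_apply, huj]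
          by_cases hS' : (⟨j, (z j, z' j)⟩ : Σ j, A j × A j) ∈ S
          · have hwj : Wfun S z z' j = z j := by
              rw [Wfun_apply, if_pos (Or.inr hS')]
            rw [hwj, if_pos (Or.inr hS')]
          · have hwj : Wfun S z z' j = z' j := by
              rw [Wfun_apply, if_neg]
              push_neg
              exact ⟨h0, hS'⟩
            rw [hwj, if_pos (Or.inl rfl)]
    rwa [heq] at hv

open Classical in
/-- The binary aggregator determined by a set `S` of vertices. -/
noncomputable def ffun {m : ℕ} {A : Fin m → Type*} (S : Set (Σ j, A j × A j)) :
    ∀ j, (Fin 2 → A j) → A j :=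
  fun j x => if x 0 = x 1 ∨ (⟨j, (x 0, x 1)⟩ : Σ j, A j × A j) ∈ S then x 0 else x 1

/-- If `H_X` is not strongly connected, then `X` admits a binary non-dictatorial
aggregator. -/
theorem statement_3 {m : ℕ} (hm : 1 ≤ m) {A : Fin m → Type*} [∀ j, Fintype (A j)]
    (hA : ∀ j, 2 ≤ Fintype.card (A j))
    (X : Set (∀ j, A j)) (hX : ∀ j, ∃ z ∈ X, ∃ z' ∈ X, z j ≠ z' j)
    (hconn : ¬ (∀ p q, IsVertex X p → IsVertex X q → p ≠ q →
      Relation.TransGen (HEdge X) p q)) :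
    ∃ f : ∀ j, (Fin 2 → A j) → A j, IsAggregator X f ∧
      ¬ ∃ d : Fin 2, ∀ z ∈ X, ∀ z' ∈ X, ∀ j, f j ![z j, z' j] = ![z j, z' j] d := by
  classical
  push_neg at hconn
  obtain ⟨p, q, hp, hq, hpq, hnr⟩ := hconn
  set S : Set (Σ j, A j × A j) :=
    {v | v = p ∨ Relation.TransGen (HEdge X) p v} with hSdef
  have hSclosed : ∀ a b, a ∈ S → HEdge X a b → b ∈ S := by
    intro a b ha hab
    rcases ha with ha | ha
    · subst ha
      exact Or.inr (Relation.TransGen.single hab)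
    · exact Or.inr (ha.tail hab)
  have hpS : p ∈ S := Or.inl rfl
  have hqS : q ∉ S := by
    rintro (h | h)
    · exact hpq h.symm
    · exact hnr h
  have hcomp : ∀ (j : Fin m) (a b : A j),
      ffun S j ![a, b] = if a = b ∨ (⟨j, (a, b)⟩ : Σ j, A j × A j) ∈ S then a else b := by
    intro j a b
    simp [ffun]
  refine ⟨ffun S, ⟨?_, ?_⟩, ?_⟩
  · intro j x
    by_cases h : x 0 = x 1 ∨ (⟨j, (x 0, x 1)⟩ : Σ j, A j × A j) ∈ S
    · exact ⟨0, if_pos h⟩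
    · exact ⟨1, if_neg h⟩
  · intro xs hxs
    have := key X S hSclosed _ (xs 0) (xs 1) (hxs 0) (hxs 1) le_rfl
    exact this
  · rintro ⟨d, hd⟩
    fin_cases d
    · -- "first dictator": contradicted at q
      obtain ⟨hne, ⟨zz, hzz, hzzq⟩, ⟨zz', hzz', hzzq'⟩⟩ := hq
      have h1 := hd zz hzz zz' hzz' q.1
      rw [hcomp, hzzq, hzzq'] at h1
      rw [if_neg] at h1
      · simp only [Matrix.cons_val_zero] at h1
        exact hne h1.symm
      · rintro (h | h)
        · exact hne h
        · exact hqS h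
    · -- "second dictator": contradicted at p
      obtain ⟨hne, ⟨zz, hzz, hzzq⟩, ⟨zz', hzz', hzzq'⟩⟩ := hp
      have h1 := hd zz hzz zz' hzz' p.1
      rw [hcomp, hzzq, hzzq'] at h1
      rw [if_pos (Or.inr hpS)] at h1
      simp only [Matrix.cons_val_one, Matrix.head_cons] at h1
      exact hne h1
end

section
/- Let X be a set of feasible evaluations and let V_1, V_2 be a partition of the vertex set of H_X such that no directed edge of H_X goes from a vertex in V_1 to a vertex in V_2. Then for all z, z' ∈ X, the evaluation w defined by w_j = z_j if z_j = z'_j or the vertex z_jz'_j lies in V_1, and w_j = z'_j if the vertex z_jz'_j lies in V_2 (for j = 1,…,m), belongs to X. -/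
/-- If `V₁, V₂` is a partition of the vertex set of `H_X` with no directed edge from
`V₁` to `V₂`, then for all `z, z' ∈ X`, the evaluation `w` with `w_j = z_j` when
`z_j = z'_j` or the vertex `z_jz'_j` lies in `V₁`, and `w_j = z'_j` when the vertex
`z_jz'_j` lies in `V₂`, belongs to `X`. -/
theorem statement_4 {m : ℕ} (hm : 1 ≤ m) {A : Fin m → Type*} [∀ j, Fintype (A j)]
    (hA : ∀ j, 2 ≤ Fintype.card (A j))
    (X : Set (∀ j, A j)) (hX : ∀ j, ∃ z ∈ X, ∃ z' ∈ X, z j ≠ z' j)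
    (V₁ V₂ : Set (Σ j, A j × A j))
    (hcover : ∀ p, IsVertex X p ↔ (p ∈ V₁ ∨ p ∈ V₂))
    (hdisj : Disjoint V₁ V₂)
    (hnoedge : ∀ p ∈ V₁, ∀ q ∈ V₂, ¬ HEdge X p q)
    (z z' w : ∀ j, A j) (hz : z ∈ X) (hz' : z' ∈ X)
    (hw : ∀ j, ((z j = z' j ∨ (⟨j, (z j, z' j)⟩ : Σ j, A j × A j) ∈ V₁) → w j = z j) ∧
               ((z j ≠ z' j ∧ (⟨j, (z j, z' j)⟩ : Σ j, A j × A j) ∈ V₂) → w j = z' j)) :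
    w ∈ X := by
  classical
  have hvert : ∀ j, z j ≠ z' j → IsVertex X (⟨j, (z j, z' j)⟩ : Σ j, A j × A j) :=
    fun j hne => ⟨hne, ⟨z, hz, rfl⟩, ⟨z', hz', rfl⟩⟩
  have hwz : ∀ j, w j = z j ∨ w j = z' j := by
    intro j
    by_cases h : z j = z' j
    · exact Or.inl ((hw j).1 (Or.inl h))
    · rcases (hcover _).1 (hvert j h) with h1 | h2
      · exact Or.inl ((hw j).1 (Or.inr h1))
      · exact Or.inr ((hw j).2 ⟨h, h2⟩)
  suffices key : ∀ n (y : ∀ j, A j), y ∈ X → (∀ i, y i = z i ∨ y i = z' i) →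
      (Finset.univ.filter (fun j => y j ≠ w j)).card ≤ n → w ∈ X by
    exact key _ z hz (fun i => Or.inl rfl) le_rfl
  intro n
  induction n with
  | zero =>
    intro y hyX hyz hdy
    have hall : ∀ j, y j = w j := by
      intro j
      by_contra hj
      have : j ∈ Finset.univ.filter (fun j => y j ≠ w j) := by
        simp [hj]
      have := Finset.card_pos.mpr ⟨j, this⟩
      omega
    have : y = w := funext hall
    rwa [this] at hyX
  | succ n ih =>
    intro y hyX hyz hdy
    by_cases h0 : ∀ j, y j = w j
    · have : y = w := funext h0
      rwa [this] at hyX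
    push_neg at h0
    obtain ⟨k, hk⟩ := h0
    have hyk := hyz k
    have hwk := hwz k
    have hnek : z k ≠ z' k := by
      intro h
      apply hk
      rcases hyk with h1 | h1 <;> rcases hwk with h2 | h2 <;> rw [h1, h2] <;>
        first | rfl | exact h | exact h.symm
    -- helper to finish with a better approximation u
    have step : ∀ u : (∀ j, A j), u ∈ X → (∀ i, u i = z i ∨ u i = z' i) →
        (Finset.univ.filter (fun j => u j ≠ w j)) ⊂
          (Finset.univ.filter (fun j => y j ≠ w j)) → w ∈ X := by
      intro u huX huz hss
      have hc := Finset.card_lt_card hss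
      exact ih u huX huz (by omega)
    rcases hwk with hwk | hwk
    · -- Case 2: w k = z k, vertex at k is in V₁, y k = z' k
      have hyk' : y k = z' k := by
        rcases hyk with h | h
        · exact absurd (h.trans hwk.symm) hk
        · exact h
      have hV1k : (⟨k, (z k, z' k)⟩ : Σ j, A j × A j) ∈ V₁ := by
        rcases (hcover _).1 (hvert k hnek) with h1 | h2
        · exact h1
        · exact absurd (((hw k).2 ⟨hnek, h2⟩).symm.trans hwk) (Ne.symm hnek)
      -- minimize disagreement with y among feasible points with value z k at k
      have hPex : ∃ nn, ∃ u : (∀ j, A j),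
          (u ∈ X ∧ u k = z k ∧ ∀ i, u i = y i ∨ u i = z i) ∧
          (Finset.univ.filter (fun i => u i ≠ y i)).card = nn :=
        ⟨_, z, ⟨hz, rfl, fun i => Or.inr rfl⟩, rfl⟩
      obtain ⟨u, hu, heu⟩ := Nat.find_spec hPex
      have hmin : ∀ v : (∀ j, A j), v ∈ X → v k = z k → (∀ i, v i = y i ∨ v i = z i) →
          (Finset.univ.filter (fun i => u i ≠ y i)).card ≤
            (Finset.univ.filter (fun i => v i ≠ y i)).card := by
        intro v h1 h2 h3
        rw [heu]
        exact Nat.find_min' hPex ⟨v, ⟨h1, h2, h3⟩, rfl⟩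
      obtain ⟨huX, huk, huy⟩ := hu
      -- key claim: each changed coordinate l ≠ k satisfies w l = z l
      have hclaim : ∀ l, l ≠ k → u l ≠ y l → w l = z l := by
        intro l hlk hul
        have hul' : u l = z l := by
          rcases huy l with h | h
          · exact absurd h hul
          · exact h
        have hyl : y l = z' l := by
          rcases hyz l with h | h
          · exact absurd (hul'.trans h.symm) hul
          · exact h
        have hnel : z l ≠ z' l := by
          intro h; exact hul (hul'.trans (h.trans hyl.symm))
        rcases (hcover _).1 (hvert l hnel) with h1 | h2
        · exact (hw l).1 (Or.inr h1)
        · -- vertex at l in V₂ : derive forbidden edge p_k → p_l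
          exfalso
          refine hnoedge _ hV1k _ h2 ?_
          refine ⟨hvert k hnek, hvert l hnel, hlk.symm, u, huX, y, hyX,
            huk, hul', hyk', hyl, ?_⟩
          rintro ⟨v, hvX, hvk, hvl, hvmem⟩
          -- v contradicts minimality of u
          have hvz : ∀ i, v i = y i ∨ v i = z i := by
            intro i
            rcases hvmem i with h | h
            · rcases huy i with h' | h'
              · exact Or.inl (h.trans h')
              · exact Or.inr (h.trans h')
            · exact Or.inl h
          have hsub : (Finset.univ.filter (fun i => v i ≠ y i)) ⊆
              (Finset.univ.filter (fun i => u i ≠ y i)) := by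
            intro i hi
            simp only [Finset.mem_filter, Finset.mem_univ, true_and] at hi ⊢
            rcases hvmem i with h | h
            · intro hcon; exact hi (h.trans hcon)
            · exact absurd h hi
          have hlmem : l ∈ (Finset.univ.filter (fun i => u i ≠ y i)) := by
            simp [hul]
          have hlnot : l ∉ (Finset.univ.filter (fun i => v i ≠ y i)) := by
            simp [hvl.trans hyl.symm]
          have hss : (Finset.univ.filter (fun i => v i ≠ y i)) ⊂
              (Finset.univ.filter (fun i => u i ≠ y i)) :=
            (Finset.ssubset_iff_of_subset hsub).mpr ⟨l, hlmem, hlnot⟩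
          have := Finset.card_lt_card hss
          have := hmin v hvX hvk hvz
          omega
      -- u strictly improves on y
      have huzz : ∀ i, u i = z i ∨ u i = z' i := by
        intro i
        rcases huy i with h | h
        · rw [h]; exact hyz i
        · exact Or.inl h
      refine step u huX huzz ?_
      have hsub : (Finset.univ.filter (fun j => u j ≠ w j)) ⊆
          (Finset.univ.filter (fun j => y j ≠ w j)) := by
        intro i hi
        simp only [Finset.mem_filter, Finset.mem_univ, true_and] at hi ⊢
        by_cases hiy : u i = y i
        · rw [← hiy]; exact hi
        · by_cases hik : i = k
          · subst hik; exact absurd (huk.trans hwk.symm) hi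
          · exact absurd ((hclaim i hik hiy) ▸ (huy i).resolve_left hiy) hi
      refine (Finset.ssubset_iff_of_subset hsub).mpr ⟨k, ?_, ?_⟩
      · simp [hk]
      · simp [huk.trans hwk.symm]
    · -- Case 1: w k = z' k, vertex at k is in V₂, y k = z k
      have hyk' : y k = z k := by
        rcases hyk with h | h
        · exact h
        · exact absurd (h.trans hwk.symm) hk
      have hV2k : (⟨k, (z k, z' k)⟩ : Σ j, A j × A j) ∈ V₂ := by
        rcases (hcover _).1 (hvert k hnek) with h1 | h2
        · exact absurd (((hw k).1 (Or.inr h1)).symm.trans hwk) hnek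
        · exact h2
      have hPex : ∃ nn, ∃ u : (∀ j, A j),
          (u ∈ X ∧ u k = z' k ∧ ∀ i, u i = y i ∨ u i = z' i) ∧
          (Finset.univ.filter (fun i => u i ≠ y i)).card = nn :=
        ⟨_, z', ⟨hz', rfl, fun i => Or.inr rfl⟩, rfl⟩
      obtain ⟨u, hu, heu⟩ := Nat.find_spec hPex
      have hmin : ∀ v : (∀ j, A j), v ∈ X → v k = z' k → (∀ i, v i = y i ∨ v i = z' i) →
          (Finset.univ.filter (fun i => u i ≠ y i)).card ≤
            (Finset.univ.filter (fun i => v i ≠ y i)).card := by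
        intro v h1 h2 h3
        rw [heu]
        exact Nat.find_min' hPex ⟨v, ⟨h1, h2, h3⟩, rfl⟩
      obtain ⟨huX, huk, huy⟩ := hu
      have hclaim : ∀ l, l ≠ k → u l ≠ y l → w l = z' l := by
        intro l hlk hul
        have hul' : u l = z' l := by
          rcases huy l with h | h
          · exact absurd h hul
          · exact h
        have hyl : y l = z l := by
          rcases hyz l with h | h
          · exact h
          · exact absurd (hul'.trans h.symm) hul
        have hnel : z l ≠ z' l := by
          intro h; exact hul (hul'.trans (h.symm.trans hyl.symm))
        rcases (hcover _).1 (hvert l hnel) with h1 | h2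
        · -- vertex at l in V₁ : derive forbidden edge p_l → p_k
          exfalso
          refine hnoedge _ h1 _ hV2k ?_
          refine ⟨hvert l hnel, hvert k hnek, hlk, y, hyX, u, huX,
            hyl, hyk', hul', huk, ?_⟩
          rintro ⟨v, hvX, hvl, hvk, hvmem⟩
          have hvz : ∀ i, v i = y i ∨ v i = z' i := by
            intro i
            rcases hvmem i with h | h
            · exact Or.inl h
            · rcases huy i with h' | h'
              · exact Or.inl (h.trans h')
              · exact Or.inr (h.trans h')
          have hsub : (Finset.univ.filter (fun i => v i ≠ y i)) ⊆
              (Finset.univ.filter (fun i => u i ≠ y i)) := by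
            intro i hi
            simp only [Finset.mem_filter, Finset.mem_univ, true_and] at hi ⊢
            rcases hvmem i with h | h
            · exact absurd h hi
            · intro hcon; exact hi (h.trans hcon)
          have hlmem : l ∈ (Finset.univ.filter (fun i => u i ≠ y i)) := by
            simp [hul]
          have hlnot : l ∉ (Finset.univ.filter (fun i => v i ≠ y i)) := by
            simp [hvl.trans hyl.symm]
          have hss : (Finset.univ.filter (fun i => v i ≠ y i)) ⊂
              (Finset.univ.filter (fun i => u i ≠ y i)) :=
            (Finset.ssubset_iff_of_subset hsub).mpr ⟨l, hlmem, hlnot⟩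
          have := Finset.card_lt_card hss
          have := hmin v hvX hvk hvz
          omega
        · exact (hw l).2 ⟨hnel, h2⟩
      have huzz : ∀ i, u i = z i ∨ u i = z' i := by
        intro i
        rcases huy i with h | h
        · rw [h]; exact hyz i
        · exact Or.inr h
      refine step u huX huzz ?_
      have hsub : (Finset.univ.filter (fun j => u j ≠ w j)) ⊆
          (Finset.univ.filter (fun j => y j ≠ w j)) := by
        intro i hi
        simp only [Finset.mem_filter, Finset.mem_univ, true_and] at hi ⊢
        by_cases hiy : u i = y i
        · rw [← hiy]; exact hi
        · by_cases hik : i = k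
          · subst hik; exact absurd (huk.trans hwk.symm) hi
          · exact absurd ((hclaim i hik hiy) ▸ (huy i).resolve_left hiy) hi
      refine (Finset.ssubset_iff_of_subset hsub).mpr ⟨k, ?_, ?_⟩
      · simp [hk]
      · simp [huk.trans hwk.symm]
end

section
/- Let X be a set of feasible evaluations, let A = ⊔_{j=1}^m A_j be the disjoint union of the position sets, and let X̃ = {((x_1,1),…,(x_m,m)) : (x_1,…,x_m) ∈ X} ⊆ A^m. Then X admits a ternary aggregator every component of which is a weak near-unanimity operation if and only if the m-ary relation X̃ has a conservative ternary polymorphism f : A^3 → A that is a weak near-unanimity operation on A. -/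
/-- The copy `X̃` of `X` inside the `m`-th power of the disjoint union `A = ⊔_j A_j`,
the disjoint union being realized as the sigma type `Σ j, A j`. -/
def tildeX {m : ℕ} {A : Fin m → Type*} (X : Set (∀ j, A j)) :
    Set (Fin m → Σ j, A j) :=
  {y | ∃ x ∈ X, y = fun j => ⟨j, x j⟩}

/-- `f` is an `n`-ary polymorphism of the `k`-ary relation `R` on `B`. -/
def IsPolymorphism {B : Type*} {k n : ℕ} (R : Set (Fin k → B))
    (f : (Fin n → B) → B) : Prop :=
  ∀ xs : Fin n → (Fin k → B), (∀ i, xs i ∈ R) → (fun j => f (fun i => xs i j)) ∈ R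

/-- An `n`-ary operation is conservative if it always returns one of its arguments. -/
def Conservative {B : Type*} {n : ℕ} (f : (Fin n → B) → B) : Prop :=
  ∀ x, ∃ i, f x = x i

/-- A ternary weak near-unanimity operation. -/
def IsWNUOp {B : Type*} (g : (Fin 3 → B) → B) : Prop :=
  ∀ x y : B, g ![y, x, x] = g ![x, y, x] ∧ g ![x, y, x] = g ![x, x, y]


open Classical in
/-- forward construction -/
noncomputable def mkG {m : ℕ} {A : Fin m → Type*} (f : ∀ j, (Fin 3 → A j) → A j)
    (x : Fin 3 → Σ j, A j) : Σ j, A j :=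
  if h : (x 1).1 = (x 0).1 ∧ (x 2).1 = (x 0).1 then
    ⟨(x 0).1, f (x 0).1 ![(x 0).2, h.1 ▸ (x 1).2, h.2 ▸ (x 2).2]⟩
  else if x 1 = x 2 then x 1 else x 0

lemma mkG_eq {m : ℕ} {A : Fin m → Type*} (f : ∀ j, (Fin 3 → A j) → A j)
    (j : Fin m) (v : Fin 3 → A j) :
    mkG f (fun i => ⟨j, v i⟩) = ⟨j, f j v⟩ := by
  have hv : ![v 0, v 1, v 2] = v := by
    funext i; fin_cases i <;> rfl
  show dite _ _ _ = _
  rw [dif_pos (⟨rfl, rfl⟩ : (j = j) ∧ (j = j))]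
  show (⟨j, f j ![v 0, v 1, v 2]⟩ : Σ k, A k) = _
  rw [hv]

lemma mkG_conservative {m : ℕ} {A : Fin m → Type*} (f : ∀ j, (Fin 3 → A j) → A j)
    (hf : ∀ j (x : Fin 3 → A j), ∃ i, f j x = x i) :
    Conservative (mkG f) := by
  intro x
  by_cases h : (x 1).1 = (x 0).1 ∧ (x 2).1 = (x 0).1
  · set M : Fin 3 → A (x 0).1 := ![(x 0).2, h.1 ▸ (x 1).2, h.2 ▸ (x 2).2] with hM
    have hv : f (x 0).1 M = (x 0).2 ∨ f (x 0).1 M = h.1 ▸ (x 1).2 ∨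
        f (x 0).1 M = h.2 ▸ (x 2).2 := by
      obtain ⟨i, hi⟩ := hf (x 0).1 M
      fin_cases i
      · left; simpa [hM] using hi
      · right; left; simpa [hM] using hi
      · right; right; simpa [hM] using hi
    have hdef : mkG f x = ⟨(x 0).1, f (x 0).1 M⟩ := by
      show dite _ _ _ = _
      rw [dif_pos h]
    rcases hv with hv | hv | hv
    · exact ⟨0, by rw [hdef, hv]⟩
    · refine ⟨1, ?_⟩
      rw [hdef, hv]
      exact Sigma.ext h.1.symm (eqRec_heq h.1 (x 1).2)
    · refine ⟨2, ?_⟩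
      rw [hdef, hv]
      exact Sigma.ext h.2.symm (eqRec_heq h.2 (x 2).2)
  · show ∃ i, dite _ _ _ = x i
    rw [dif_neg h]
    by_cases h2 : x 1 = x 2
    · exact ⟨1, if_pos h2⟩
    · exact ⟨0, if_neg h2⟩

lemma mkG_wnu {m : ℕ} {A : Fin m → Type*} (f : ∀ j, (Fin 3 → A j) → A j)
    (hw : ∀ j, IsWNUOp (f j)) : IsWNUOp (mkG f) := by
  intro x y
  by_cases hxy : x.1 = y.1
  · obtain ⟨jx, a⟩ := x
    obtain ⟨jy, b⟩ := y
    simp only at hxy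
    subst hxy
    have e1 : (![⟨jx, b⟩, ⟨jx, a⟩, ⟨jx, a⟩] : Fin 3 → Σ k, A k)
        = fun i => ⟨jx, ![b, a, a] i⟩ := by funext i; fin_cases i <;> rfl
    have e2 : (![⟨jx, a⟩, ⟨jx, b⟩, ⟨jx, a⟩] : Fin 3 → Σ k, A k)
        = fun i => ⟨jx, ![a, b, a] i⟩ := by funext i; fin_cases i <;> rfl
    have e3 : (![⟨jx, a⟩, ⟨jx, a⟩, ⟨jx, b⟩] : Fin 3 → Σ k, A k)
        = fun i => ⟨jx, ![a, a, b] i⟩ := by funext i; fin_cases i <;> rfl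
    rw [e1, e2, e3, mkG_eq, mkG_eq, mkG_eq]
    obtain ⟨w1, w2⟩ := hw jx a b
    exact ⟨by rw [w1], by rw [w2]⟩
  · have hne : x ≠ y := fun h => hxy (congrArg Sigma.fst h)
    have c1 : mkG f ![y, x, x] = x := by
      show dite _ _ _ = _
      rw [dif_neg (fun hh => hxy (hh.1 : _))]
      simp
    have c2 : mkG f ![x, y, x] = x := by
      show dite _ _ _ = _
      rw [dif_neg (fun hh => hxy ((hh.1 : y.1 = x.1)).symm)]
      simp [hne.symm]
    have c3 : mkG f ![x, x, y] = x := by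
      show dite _ _ _ = _
      rw [dif_neg (fun hh => hxy ((hh.2 : y.1 = x.1)).symm)]
      simp [hne]
    rw [c1, c2, c3]
    exact ⟨rfl, rfl⟩

open Classical in
/-- backward construction -/
noncomputable def mkF {m : ℕ} {A : Fin m → Type*}
    (g : (Fin 3 → Σ j, A j) → Σ j, A j) (j : Fin m) (x : Fin 3 → A j) : A j :=
  if h : (g (fun i => ⟨j, x i⟩)).1 = j then h ▸ (g (fun i => ⟨j, x i⟩)).2 else x 0

lemma mkF_eq {m : ℕ} {A : Fin m → Type*}
    (g : (Fin 3 → Σ j, A j) → Σ j, A j) (j : Fin m) (x : Fin 3 → A j) (a : A j)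
    (h : g (fun i => ⟨j, x i⟩) = ⟨j, a⟩) : mkF g j x = a := by
  have h1 : (g (fun i => ⟨j, x i⟩)).1 = j := by rw [h]
  show dite _ _ _ = _
  rw [dif_pos h1]
  apply eq_of_heq
  refine HEq.trans (eqRec_heq h1 _) ?_
  rw [h]

/-- `X` admits a ternary aggregator all of whose components are weak near-unanimity
operations iff `X̃` has a conservative ternary polymorphism that is a weak
near-unanimity operation on the disjoint union `A`. -/
theorem statement_8 {m : ℕ} (hm : 1 ≤ m) {A : Fin m → Type*} [∀ j, Fintype (A j)]
    (hA : ∀ j, 2 ≤ Fintype.card (A j))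
    (X : Set (∀ j, A j)) (hX : ∀ j, ∃ z ∈ X, ∃ z' ∈ X, z j ≠ z' j) :
    (∃ f : ∀ j, (Fin 3 → A j) → A j, IsAggregator X f ∧ ∀ j, IsWNUOp (f j)) ↔
    (∃ g : (Fin 3 → Σ j, A j) → Σ j, A j,
      Conservative g ∧ IsPolymorphism (tildeX X) g ∧ IsWNUOp g) := by
  constructor
  · rintro ⟨f, ⟨hcons, hagg⟩, hwnu⟩
    refine ⟨mkG f, mkG_conservative f hcons, ?_, mkG_wnu f hwnu⟩
    intro xs hxs
    choose xv hxv hxe using hxs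
    refine ⟨fun j => f j (fun i => xv i j), hagg xv hxv, ?_⟩
    funext j
    have hcol : (fun i => xs i j) = fun i => (⟨j, xv i j⟩ : Σ k, A k) := by
      funext i; rw [hxe i]
    show mkG f (fun i => xs i j) = _
    rw [hcol, mkG_eq]
  · rintro ⟨g, hcons, hpoly, hwnu⟩
    refine ⟨mkF g, ⟨?_, ?_⟩, ?_⟩
    · intro j x
      obtain ⟨i, hi⟩ := hcons (fun i => ⟨j, x i⟩)
      exact ⟨i, mkF_eq g j x (x i) hi⟩
    · intro xs hxs
      have hz : ∀ i, (fun j => (⟨j, xs i j⟩ : Σ k, A k)) ∈ tildeX X :=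
        fun i => ⟨xs i, hxs i, rfl⟩
      obtain ⟨w, hw, hweq⟩ := hpoly _ hz
      have : (fun j => mkF g j (fun i => xs i j)) = w := by
        funext j
        exact mkF_eq g j _ (w j) (congrFun hweq j)
      rw [this]
      exact hw
    · intro j a b
      have e1 : (fun i => (⟨j, ![b, a, a] i⟩ : Σ k, A k))
          = ![⟨j, b⟩, ⟨j, a⟩, ⟨j, a⟩] := by funext i; fin_cases i <;> rfl
      have e2 : (fun i => (⟨j, ![a, b, a] i⟩ : Σ k, A k))
          = ![⟨j, a⟩, ⟨j, b⟩, ⟨j, a⟩] := by funext i; fin_cases i <;> rfl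
      have e3 : (fun i => (⟨j, ![a, a, b] i⟩ : Σ k, A k))
          = ![⟨j, a⟩, ⟨j, a⟩, ⟨j, b⟩] := by funext i; fin_cases i <;> rfl
      obtain ⟨w1, w2⟩ := hwnu ⟨j, a⟩ ⟨j, b⟩
      have key : ∃ c : A j, g ![⟨j, b⟩, ⟨j, a⟩, ⟨j, a⟩] = ⟨j, c⟩ := by
        obtain ⟨i, hi⟩ := hcons ![⟨j, b⟩, ⟨j, a⟩, ⟨j, a⟩]
        fin_cases i
        · exact ⟨b, by simpa using hi⟩
        · exact ⟨a, by simpa using hi⟩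
        · exact ⟨a, by simpa using hi⟩
      obtain ⟨c, hc⟩ := key
      have m1 : mkF g j ![b, a, a] = c := mkF_eq g j _ c (by rw [e1]; exact hc)
      have m2 : mkF g j ![a, b, a] = c := mkF_eq g j _ c (by rw [e2, ← w1]; exact hc)
      have m3 : mkF g j ![a, a, b] = c := mkF_eq g j _ c (by rw [e3, ← w2, ← w1]; exact hc)
      exact ⟨m1.trans m2.symm, m2.trans m3.symm⟩
end

section
/- Let Γ be a constraint language on a finite set A. Suppose that for every two-element subset B ⊆ A there exists a conservative polymorphism f of Γ (depending on B) such that either f is binary and its restriction to B equals ∧ or ∨ under some identification of B with {0,1}, or f is ternary and its restriction to B equals maj or ⊕. Then Γ has a ternary conservative polymorphism that is a weak near-unanimity operation on A. -/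
/-- A binary operation is conservative if it always returns one of its arguments. -/
def Cons₂ {A : Type*} (f : A → A → A) : Prop := ∀ x y, f x y = x ∨ f x y = y

/-- A ternary operation is conservative if it always returns one of its arguments. -/
def Cons₃ {A : Type*} (f : A → A → A → A) : Prop :=
  ∀ x y z, f x y z = x ∨ f x y z = y ∨ f x y z = z

/-- A binary operation is a polymorphism of the `k`-ary relation `R`. -/
def IsPoly₂ {A : Type*} {k : ℕ} (R : Set (Fin k → A)) (f : A → A → A) : Prop :=
  ∀ x ∈ R, ∀ y ∈ R, (fun j => f (x j) (y j)) ∈ R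

/-- A ternary operation is a polymorphism of the `k`-ary relation `R`. -/
def IsPoly₃ {A : Type*} {k : ℕ} (R : Set (Fin k → A)) (f : A → A → A → A) : Prop :=
  ∀ x ∈ R, ∀ y ∈ R, ∀ z ∈ R, (fun j => f (x j) (y j) (z j)) ∈ R

/-- The restriction of `f` to the two-element set `{a, b}` is `∧`, identifying `a` with
`0` and `b` with `1`. -/
def IsAndOn {A : Type*} (f : A → A → A) (a b : A) : Prop :=
  f a a = a ∧ f a b = a ∧ f b a = a ∧ f b b = b

/-- The restriction of `f` to the two-element set `{a, b}` is `∨`, identifying `a` with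
`0` and `b` with `1`.  (Swapping the roles of `a` and `b` interchanges `IsAndOn` and
`IsOrOn`, so the disjunction `IsAndOn f a b ∨ IsOrOn f a b` says that `f` restricted to
`{a,b}` is `∧` or `∨` under some identification of `{a,b}` with `{0,1}`.) -/
def IsOrOn {A : Type*} (f : A → A → A) (a b : A) : Prop :=
  f a a = a ∧ f a b = b ∧ f b a = b ∧ f b b = b

/-- The restriction of `g` to the two-element set `{a, b}` is the majority operation. -/
def IsMajOn {A : Type*} (g : A → A → A → A) (a b : A) : Prop :=
  ∀ x ∈ ({a, b} : Set A), ∀ y ∈ ({a, b} : Set A),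
    g x x y = x ∧ g x y x = x ∧ g y x x = x

/-- The restriction of `g` to the two-element set `{a, b}` is the minority (xor)
operation `⊕`. -/
def IsXorOn {A : Type*} (g : A → A → A → A) (a b : A) : Prop :=
  ∀ x ∈ ({a, b} : Set A), ∀ y ∈ ({a, b} : Set A),
    g x x y = y ∧ g x y x = y ∧ g y x x = y

/-- The restriction of `g` to the two-element set `{a, b}` is a weak near-unanimity
operation. -/
def IsWNUOn {A : Type*} (g : A → A → A → A) (a b : A) : Prop :=
  ∀ x ∈ ({a, b} : Set A), ∀ y ∈ ({a, b} : Set A),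
    g y x x = g x y x ∧ g x y x = g x x y

/-- `g` is a weak near-unanimity operation. -/
def IsWNU {A : Type*} (g : A → A → A → A) : Prop :=
  ∀ x y, g y x x = g x y x ∧ g x y x = g x x y

section Aux

variable {A : Type*}

/-- Auxiliary: `f` satisfies the weak near-unanimity identities at the ordered pair `(a,b)`. -/
def WNUat (f : A → A → A → A) (a b : A) : Prop :=
  f b a a = f a b a ∧ f a b a = f a a b

/-- Auxiliary: composition of ternary operations by cyclic substitution. -/
def comp3 (f g : A → A → A → A) : A → A → A → A :=
  fun x y z => f (g x y z) (g y z x) (g z x y)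

lemma comp3_cons {f g : A → A → A → A} (hf : Cons₃ f) (hg : Cons₃ g) :
    Cons₃ (comp3 f g) := by
  intro x y z
  show f (g x y z) (g y z x) (g z x y) = x ∨ f (g x y z) (g y z x) (g z x y) = y ∨
    f (g x y z) (g y z x) (g z x y) = z
  rcases hf (g x y z) (g y z x) (g z x y) with h | h | h <;> rw [h]
  · exact hg x y z
  · have := hg y z x; tauto
  · have := hg z x y; tauto

lemma comp3_poly {k : ℕ} {R : Set (Fin k → A)} {f g : A → A → A → A}
    (hf : IsPoly₃ R f) (hg : IsPoly₃ R g) : IsPoly₃ R (comp3 f g) := by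
  intro x hx y hy z hz
  exact hf _ (hg x hx y hy z hz) _ (hg y hy z hz x hx) _ (hg z hz x hx y hy)

lemma cyclic {f : A → A → A → A} {a b : A} (hab : WNUat f a b) (hba : WNUat f b a) :
    ∀ p q r, (p = a ∨ p = b) → (q = a ∨ q = b) → (r = a ∨ r = b) → f p q r = f r p q := by
  obtain ⟨h1, h2⟩ := hab
  obtain ⟨h3, h4⟩ := hba
  rintro p q r (rfl | rfl) (rfl | rfl) (rfl | rfl) <;> simp only [h1, h2, h3, h4]

lemma wnuat_comp3_left {f g : A → A → A → A} {a b : A} (hg : WNUat g a b) :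
    WNUat (comp3 f g) a b := by
  obtain ⟨h1, h2⟩ := hg
  constructor <;> simp only [comp3, h1, h2]

lemma wnuat_comp3_right {f g : A → A → A → A} {a b : A} (hg : Cons₃ g)
    (hfab : WNUat f a b) (hfba : WNUat f b a) : WNUat (comp3 f g) a b := by
  have key := cyclic hfab hfba
  have m : ∀ x y z : A, (x = a ∨ x = b) → (y = a ∨ y = b) → (z = a ∨ z = b) →
      (g x y z = a ∨ g x y z = b) := by
    intro x y z hx hy hz
    rcases hg x y z with h | h | h <;> rw [h] <;> tauto
  have hp := m b a a (Or.inr rfl) (Or.inl rfl) (Or.inl rfl)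
  have hq := m a a b (Or.inl rfl) (Or.inl rfl) (Or.inr rfl)
  have hr := m a b a (Or.inl rfl) (Or.inr rfl) (Or.inl rfl)
  exact ⟨key _ _ _ hp hq hr, key _ _ _ hr hp hq⟩

lemma pair_op {ι : Type*} {ar : ι → ℕ} {Γ : ∀ i, Set (Fin (ar i) → A)} {a b : A}
    (hab : a ≠ b)
    (h : a ≠ b →
      (∃ f : A → A → A, Cons₂ f ∧ (∀ i, IsPoly₂ (Γ i) f) ∧
        (IsAndOn f a b ∨ IsOrOn f a b)) ∨
      (∃ g : A → A → A → A, Cons₃ g ∧ (∀ i, IsPoly₃ (Γ i) g) ∧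
        (IsMajOn g a b ∨ IsXorOn g a b))) :
    ∃ g : A → A → A → A, Cons₃ g ∧ (∀ i, IsPoly₃ (Γ i) g) ∧ WNUat g a b ∧ WNUat g b a := by
  rcases h hab with ⟨f, hc, hp, hfo⟩ | ⟨g, hc, hp, hgo⟩
  · refine ⟨fun x y z => f (f x y) z, ?_, ?_, ?_, ?_⟩
    · intro x y z
      show f (f x y) z = x ∨ f (f x y) z = y ∨ f (f x y) z = z
      rcases hc (f x y) z with h2 | h2 <;> rw [h2]
      · rcases hc x y with h1 | h1 <;> rw [h1] <;> tauto
      · tauto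
    · intro i x hx y hy z hz
      exact hp i _ (hp i x hx y hy) z hz
    · rcases hfo with ⟨e1, e2, e3, e4⟩ | ⟨e1, e2, e3, e4⟩ <;>
        exact ⟨by simp only [e1, e2, e3, e4], by simp only [e1, e2, e3, e4]⟩
    · rcases hfo with ⟨e1, e2, e3, e4⟩ | ⟨e1, e2, e3, e4⟩ <;>
        exact ⟨by simp only [e1, e2, e3, e4], by simp only [e1, e2, e3, e4]⟩
  · refine ⟨g, hc, hp, ?_, ?_⟩
    · rcases hgo with hm | hm <;>
      · obtain ⟨e1, e2, e3⟩ := hm a (by simp) b (by simp)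
        exact ⟨e3.trans e2.symm, e2.trans e1.symm⟩
    · rcases hgo with hm | hm <;>
      · obtain ⟨e1, e2, e3⟩ := hm b (by simp) a (by simp)
        exact ⟨e3.trans e2.symm, e2.trans e1.symm⟩

lemma main_list {ι : Type*} {ar : ι → ℕ} {Γ : ∀ i, Set (Fin (ar i) → A)}
    (h : ∀ a b : A, a ≠ b →
      (∃ f : A → A → A, Cons₂ f ∧ (∀ i, IsPoly₂ (Γ i) f) ∧
        (IsAndOn f a b ∨ IsOrOn f a b)) ∨
      (∃ g : A → A → A → A, Cons₃ g ∧ (∀ i, IsPoly₃ (Γ i) g) ∧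
        (IsMajOn g a b ∨ IsXorOn g a b)))
    (L : List (A × A)) :
    ∃ H : A → A → A → A, Cons₃ H ∧ (∀ i, IsPoly₃ (Γ i) H) ∧
      ∀ p ∈ L, WNUat H p.1 p.2 ∧ WNUat H p.2 p.1 := by
  induction L with
  | nil => exact ⟨fun x _ _ => x, fun _ _ _ => Or.inl rfl, fun i x hx y _ z _ => hx, by simp⟩
  | cons p L ih =>
    obtain ⟨H, hHc, hHp, hHw⟩ := ih
    by_cases hab : p.1 = p.2
    · refine ⟨H, hHc, hHp, ?_⟩
      rintro q hq
      rcases List.mem_cons.mp hq with rfl | hq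
      · rw [hab]; exact ⟨⟨rfl, rfl⟩, ⟨rfl, rfl⟩⟩
      · exact hHw q hq
    · obtain ⟨g, hgc, hgp, hgab, hgba⟩ := pair_op hab (h p.1 p.2)
      refine ⟨comp3 H g, comp3_cons hHc hgc, fun i => comp3_poly (hHp i) (hgp i), ?_⟩
      rintro q hq
      rcases List.mem_cons.mp hq with rfl | hq
      · exact ⟨wnuat_comp3_left hgab, wnuat_comp3_left hgba⟩
      · obtain ⟨w1, w2⟩ := hHw q hq
        exact ⟨wnuat_comp3_right hgc w1 w2, wnuat_comp3_right hgc w2 w1⟩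

end Aux

/-- If, for every two-element subset `{a,b}` of `A`, the constraint language `Γ`
(a finite indexed family of finitary relations on `A`) has a conservative polymorphism
that is binary and restricts to `∧` or `∨` on `{a,b}`, or ternary and restricts to
`maj` or `⊕` on `{a,b}`, then `Γ` has a ternary conservative polymorphism that is a
weak near-unanimity operation on `A`. -/
theorem statement_9 {A : Type*} [Fintype A] [Nonempty A]
    {ι : Type*} [Fintype ι] (ar : ι → ℕ) (Γ : ∀ i, Set (Fin (ar i) → A))
    (h : ∀ a b : A, a ≠ b →
      (∃ f : A → A → A, Cons₂ f ∧ (∀ i, IsPoly₂ (Γ i) f) ∧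
        (IsAndOn f a b ∨ IsOrOn f a b)) ∨
      (∃ g : A → A → A → A, Cons₃ g ∧ (∀ i, IsPoly₃ (Γ i) g) ∧
        (IsMajOn g a b ∨ IsXorOn g a b))) :
    ∃ h' : A → A → A → A, Cons₃ h' ∧ (∀ i, IsPoly₃ (Γ i) h') ∧ IsWNU h' := by
  classical
  obtain ⟨H, hc, hp, hw⟩ := main_list h (Finset.univ.toList (α := A × A))
  refine ⟨H, hc, hp, fun x y => ?_⟩
  exact (hw (x, y) (by simp)).1
end

section
/- Let Γ be a constraint language on a finite set A. If Γ has a ternary conservative polymorphism h that is a weak near-unanimity operation on A, then for every two-element subset B ⊆ A there exists a conservative polymorphism f of Γ such that either f is binary and its restriction to B equals ∧ or ∨ under some identification of B with {0,1}, or f is ternary and its restriction to B equals maj or ⊕. -/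
/-- If the constraint language `Γ` has a ternary conservative polymorphism that is a
weak near-unanimity operation on `A`, then for every two-element subset `{a,b}` of `A`
there is a conservative polymorphism of `Γ` that is binary and restricts to `∧` or `∨`
on `{a,b}`, or ternary and restricts to `maj` or `⊕` on `{a,b}`. -/
theorem statement_10 {A : Type*} [Fintype A] [Nonempty A]
    {ι : Type*} [Fintype ι] (ar : ι → ℕ) (Γ : ∀ i, Set (Fin (ar i) → A))
    (h : A → A → A → A) (hcons : Cons₃ h) (hpoly : ∀ i, IsPoly₃ (Γ i) h)
    (hwnu : IsWNU h) :
    ∀ a b : A, a ≠ b →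
      (∃ f : A → A → A, Cons₂ f ∧ (∀ i, IsPoly₂ (Γ i) f) ∧
        (IsAndOn f a b ∨ IsOrOn f a b)) ∨
      (∃ g : A → A → A → A, Cons₃ g ∧ (∀ i, IsPoly₃ (Γ i) g) ∧
        (IsMajOn g a b ∨ IsXorOn g a b)) := by
  intro a b hab
  have e1 : ∀ x y, h y x x = h x x y := fun x y => ((hwnu x y).1).trans (hwnu x y).2
  have e2 : ∀ x y, h x y x = h x x y := fun x y => (hwnu x y).2
  have haa : h a a a = a := by rcases hcons a a a with h' | h' | h' <;> exact h'
  have hbb : h b b b = b := by rcases hcons b b b with h' | h' | h' <;> exact h'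
  have hfc : Cons₂ (fun x y => h x x y) := by
    intro x y
    rcases hcons x x y with h' | h' | h'
    · exact Or.inl h'
    · exact Or.inl h'
    · exact Or.inr h'
  have hfp : ∀ i, IsPoly₂ (Γ i) (fun x y => h x x y) := by
    intro i x hx y hy
    exact hpoly i x hx x hx y hy
  rcases hcons a a b with hu | hu | hu
  · rcases hcons b b a with hv | hv | hv
    -- u = a, v = b : majority
    · right
      refine ⟨h, hcons, hpoly, Or.inl ?_⟩
      rintro x (rfl | rfl) y (rfl | rfl) <;>
        refine ⟨?_, ?_, ?_⟩ <;> (try simp only [e1, e2]) <;>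
        first | exact haa | exact hbb | exact hu | exact hv
    · right
      refine ⟨h, hcons, hpoly, Or.inl ?_⟩
      rintro x (rfl | rfl) y (rfl | rfl) <;>
        refine ⟨?_, ?_, ?_⟩ <;> (try simp only [e1, e2]) <;>
        first | exact haa | exact hbb | exact hu | exact hv
    -- u = a, v = a : f = ∧
    · left
      refine ⟨fun x y => h x x y, hfc, hfp, Or.inl ⟨haa, hu, hv, hbb⟩⟩
  · rcases hcons b b a with hv | hv | hv
    · right
      refine ⟨h, hcons, hpoly, Or.inl ?_⟩
      rintro x (rfl | rfl) y (rfl | rfl) <;>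
        refine ⟨?_, ?_, ?_⟩ <;> (try simp only [e1, e2]) <;>
        first | exact haa | exact hbb | exact hu | exact hv
    · right
      refine ⟨h, hcons, hpoly, Or.inl ?_⟩
      rintro x (rfl | rfl) y (rfl | rfl) <;>
        refine ⟨?_, ?_, ?_⟩ <;> (try simp only [e1, e2]) <;>
        first | exact haa | exact hbb | exact hu | exact hv
    · left
      refine ⟨fun x y => h x x y, hfc, hfp, Or.inl ⟨haa, hu, hv, hbb⟩⟩
  · rcases hcons b b a with hv | hv | hv
    -- u = b, v = b : f = ∨
    · left
      refine ⟨fun x y => h x x y, hfc, hfp, Or.inr ⟨haa, hu, hv, hbb⟩⟩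
    · left
      refine ⟨fun x y => h x x y, hfc, hfp, Or.inr ⟨haa, hu, hv, hbb⟩⟩
    -- u = b, v = a : minority
    · right
      refine ⟨h, hcons, hpoly, Or.inr ?_⟩
      rintro x (rfl | rfl) y (rfl | rfl) <;>
        refine ⟨?_, ?_, ?_⟩ <;> (try simp only [e1, e2]) <;>
        first | exact haa | exact hbb | exact hu | exact hv
end

section
/- Let f, g : A^3 → A be ternary conservative operations on a finite set A and let B ⊆ A be a two-element subset. If the restriction of f to B or the restriction of g to B is a weak near-unanimity operation, then the restriction of f ⋄ g to B is a weak near-unanimity operation. -/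
/-- The diamond operation on ternary operations. -/
def diamond {A : Type*} (f g : A → A → A → A) : A → A → A → A :=
  fun x y z => f (g x y z) (g y z x) (g z x y)

/-- If `f` and `g` are ternary conservative operations on a finite set `A` and `B = {a,b}`
is a two-element subset such that the restriction of `f` or of `g` to `B` is a weak
near-unanimity operation, then so is the restriction of `f ⋄ g` to `B`. -/
theorem statement_13 {A : Type*} [Fintype A] [Nonempty A]
    (f g : A → A → A → A) (hfc : Cons₃ f) (hgc : Cons₃ g)
    {a b : A} (hab : a ≠ b)
    (h : IsWNUOn f a b ∨ IsWNUOn g a b) :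
    IsWNUOn (diamond f g) a b := by
  intro x hx y hy
  simp only [Set.mem_insert_iff, Set.mem_singleton_iff] at hx hy
  unfold diamond
  rcases eq_or_ne x y with rfl | hxy
  · exact ⟨rfl, rfl⟩
  have hu := hgc y x x
  have hv := hgc x x y
  have hw := hgc x y x
  rcases h with hf | hg
  · have h1 := hf x (by rcases hx with rfl|rfl <;> simp) y (by rcases hy with rfl|rfl <;> simp)
    have h2 := hf y (by rcases hy with rfl|rfl <;> simp) x (by rcases hx with rfl|rfl <;> simp)
    rcases hu with e1|e1|e1 <;> rcases hv with e2|e2|e2 <;> rcases hw with e3|e3|e3 <;>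
      rw [e1, e2, e3] <;> simp_all <;> tauto
  · have hg2 := hg x (by rcases hx with rfl|rfl <;> simp) y (by rcases hy with rfl|rfl <;> simp)
    rw [hg2.1, hg2.2]
    exact ⟨rfl, rfl⟩
end

section
/- Let Y ⊆ ∏_{j=1}^l A_j and Z ⊆ ∏_{j=l+1}^m A_j be sets of feasible evaluations, where 1 ≤ l < m, and let X = Y × Z. If Y is an impossibility domain (admits no non-dictatorial aggregator of any arity) or Z is an impossibility domain, then X is not a uniform possibility domain. -/
/-- A set of feasible evaluations: every projection has at least two elements. -/
def Feasible {m : ℕ} {A : Fin m → Type*} (X : Set (∀ j, A j)) : Prop :=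
  ∀ j, ∃ z ∈ X, ∃ z' ∈ X, z j ≠ z' j

/-- An `n`-ary tuple of operations is dictatorial on `X` if, on tuples from `X`,
each component acts as the projection on a common coordinate `d`. -/
def IsDictatorial {m : ℕ} {A : Fin m → Type*} {n : ℕ} (X : Set (∀ j, A j))
    (f : ∀ j, (Fin n → A j) → A j) : Prop :=
  ∃ d : Fin n, ∀ xs : Fin n → (∀ j, A j), (∀ i, xs i ∈ X) →
    ∀ j, f j (fun i => xs i j) = xs d j

/-- `X` is a possibility domain: it admits a non-dictatorial aggregator of some
arity `n ≥ 2`. -/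
def IsPossibilityDomain {m : ℕ} {A : Fin m → Type*} (X : Set (∀ j, A j)) : Prop :=
  ∃ n : ℕ, 2 ≤ n ∧ ∃ f : ∀ j, (Fin n → A j) → A j,
    IsAggregator X f ∧ ¬ IsDictatorial X f

/-- An `n`-ary aggregator is uniform non-dictatorial on `X` if, for every issue `j` and
every two-element subset `{a,b}` of the `j`-th projection of `X`, the restriction of its
`j`-th component to `{a,b}ⁿ` differs from every projection. -/
def IsUniformNonDict {m : ℕ} {A : Fin m → Type*} {n : ℕ} (X : Set (∀ j, A j))
    (f : ∀ j, (Fin n → A j) → A j) : Prop :=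
  ∀ j, ∀ a b : A j, a ≠ b → (∃ z ∈ X, z j = a) → (∃ z ∈ X, z j = b) →
    ∀ d : Fin n, ∃ x : Fin n → A j, (∀ i, x i = a ∨ x i = b) ∧ f j x ≠ x d

/-- `X` is a uniform possibility domain: it admits a uniform non-dictatorial aggregator
of some arity `n ≥ 2`. -/
def IsUniformPossibilityDomain {m : ℕ} {A : Fin m → Type*} (X : Set (∀ j, A j)) : Prop :=
  ∃ n : ℕ, 2 ≤ n ∧ ∃ f : ∀ j, (Fin n → A j) → A j,
    IsAggregator X f ∧ IsUniformNonDict X f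

/-- If `X = Y × Z` and `Y` or `Z` is an impossibility domain, then `X` is not a
uniform possibility domain. -/
theorem statement_17 {l r : ℕ} (hl : 1 ≤ l) (hr : 1 ≤ r)
    {A : Fin (l + r) → Type*} [∀ j, Fintype (A j)] (hA : ∀ j, 2 ≤ Fintype.card (A j))
    (Y : Set (∀ j : Fin l, A (Fin.castAdd r j)))
    (Z : Set (∀ j : Fin r, A (Fin.natAdd l j)))
    (hY : Feasible Y) (hZ : Feasible Z)
    (X : Set (∀ j, A j))
    (hXdef : X = {x | (fun j => x (Fin.castAdd r j)) ∈ Y ∧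
                      (fun j => x (Fin.natAdd l j)) ∈ Z})
    (h : ¬ IsPossibilityDomain Y ∨ ¬ IsPossibilityDomain Z) :
    ¬ IsUniformPossibilityDomain X := by
  classical
  subst hXdef
  rintro ⟨n, hn, f, ⟨hcons, hclos⟩, hunif⟩
  obtain ⟨z0, hz0, -⟩ := hZ ⟨0, hr⟩
  obtain ⟨y0, hy0, -⟩ := hY ⟨0, hl⟩
  have hglue : ∀ y ∈ Y, ∀ z ∈ Z,
      (Fin.addCases (motive := fun j => A j) y z) ∈
        {x : ∀ j, A j | (fun j => x (Fin.castAdd r j)) ∈ Y ∧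
          (fun j => x (Fin.natAdd l j)) ∈ Z} := by
    intro y hy z hz
    constructor
    · have : (fun j => Fin.addCases (motive := fun j => A j) y z (Fin.castAdd r j)) = y := by
        funext j; exact Fin.addCases_left j
      rw [this]; exact hy
    · have : (fun j => Fin.addCases (motive := fun j => A j) y z (Fin.natAdd l j)) = z := by
        funext j; exact Fin.addCases_right j
      rw [this]; exact hz
  rcases h with hP | hP
  · -- Y is an impossibility domain
    rw [IsPossibilityDomain] at hP
    push_neg at hP
    set g : ∀ j : Fin l, (Fin n → A (Fin.castAdd r j)) → A (Fin.castAdd r j) :=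
      fun j => f (Fin.castAdd r j) with hg
    have hagg : IsAggregator Y g := by
      constructor
      · intro j x; exact hcons _ x
      · intro ys hys
        have := hclos (fun i => Fin.addCases (motive := fun j => A j) (ys i) z0)
          (fun i => hglue _ (hys i) _ hz0)
        have h1 := this.1
        simp only [Fin.addCases_left] at h1
        exact h1
    obtain ⟨d, hd⟩ := hP n hn g hagg
    set j0 : Fin l := ⟨0, hl⟩ with hj0
    obtain ⟨y, hy, y', hy', hne⟩ := hY j0
    obtain ⟨x, hx, hfx⟩ := hunif (Fin.castAdd r j0) (y j0) (y' j0) hne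
      ⟨Fin.addCases y z0, hglue y hy z0 hz0, Fin.addCases_left j0⟩
      ⟨Fin.addCases y' z0, hglue y' hy' z0 hz0, Fin.addCases_left j0⟩ d
    set ys : Fin n → ∀ j : Fin l, A (Fin.castAdd r j) :=
      fun i => if x i = y j0 then y else y' with hys
    have hmem : ∀ i, ys i ∈ Y := by
      intro i; by_cases hc : x i = y j0 <;> simp [hys, hc, hy, hy']
    have hcol : (fun i => ys i j0) = x := by
      funext i
      rcases hx i with hxa | hxb
      · simp [hys, hxa]
      · by_cases hc : x i = y j0
        · simp [hys, hc]
        · simp only [hys]; rw [if_neg hc]; exact hxb.symm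
    have hdd := hd ys hmem j0
    rw [hcol] at hdd
    exact hfx (hdd.trans (congrFun hcol d))
  · -- Z is an impossibility domain
    rw [IsPossibilityDomain] at hP
    push_neg at hP
    set g : ∀ j : Fin r, (Fin n → A (Fin.natAdd l j)) → A (Fin.natAdd l j) :=
      fun j => f (Fin.natAdd l j) with hg
    have hagg : IsAggregator Z g := by
      constructor
      · intro j x; exact hcons _ x
      · intro zs hzs
        have := hclos (fun i => Fin.addCases (motive := fun j => A j) y0 (zs i))
          (fun i => hglue _ hy0 _ (hzs i))
        have h1 := this.2
        simp only [Fin.addCases_right] at h1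
        exact h1
    obtain ⟨d, hd⟩ := hP n hn g hagg
    set j0 : Fin r := ⟨0, hr⟩ with hj0
    obtain ⟨z, hz, z', hz', hne⟩ := hZ j0
    obtain ⟨x, hx, hfx⟩ := hunif (Fin.natAdd l j0) (z j0) (z' j0) hne
      ⟨Fin.addCases y0 z, hglue y0 hy0 z hz, Fin.addCases_right j0⟩
      ⟨Fin.addCases y0 z', hglue y0 hy0 z' hz', Fin.addCases_right j0⟩ d
    set zs : Fin n → ∀ j : Fin r, A (Fin.natAdd l j) :=
      fun i => if x i = z j0 then z else z' with hzs
    have hmem : ∀ i, zs i ∈ Z := by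
      intro i; by_cases hc : x i = z j0 <;> simp [hzs, hc, hz, hz']
    have hcol : (fun i => zs i j0) = x := by
      funext i
      rcases hx i with hxa | hxb
      · simp [hzs, hxa]
      · by_cases hc : x i = z j0
        · simp [hzs, hc]
        · simp only [hzs]; rw [if_neg hc]; exact hxb.symm
    have hdd := hd zs hmem j0
    rw [hcol] at hdd
    exact hfx (hdd.trans (congrFun hcol d))
end

section
/- Let X be a set of feasible evaluations. Then X is a possibility domain if and only if X admits a binary non-dictatorial aggregator, or X admits a majority aggregator, or X admits a minority aggregator. -/
/-- A ternary majority operation. -/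
def IsMajorityOp {B : Type*} (g : (Fin 3 → B) → B) : Prop :=
  ∀ x y : B, g ![x, x, y] = x ∧ g ![x, y, x] = x ∧ g ![y, x, x] = x

/-- A ternary minority operation. -/
def IsMinorityOp {B : Type*} (g : (Fin 3 → B) → B) : Prop :=
  ∀ x y : B, g ![x, x, y] = y ∧ g ![x, y, x] = y ∧ g ![y, x, x] = y

/-!
Assume every binary aggregator for `X` is dictatorial and `X` admits neither a majority nor a
minority aggregator; we show by induction on `n` that every `n`-ary aggregator `f` is dictatorial.
Call a set `S` of voters decisive if `f` returns `u` whenever the voters in `S` submit `u` and the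
others `v`. Binary minors of `f` show that exactly one of `S`, `Sᶜ` is decisive, and the ternary
minor along a partition `S, T, (S ∪ T)ᶜ` would be turned into a majority or minority aggregator
unless the decisive sets form an ultrafilter; on a finite set it is principal, generated by a
voter `d`. Identifying two voters gives an `(n - 1)`-ary minor, dictatorial by induction, so `f`
follows `d` on every profile with two equal rows. Finally, if `f` deviated from `d` on a profile,
letting the voter `k` it followed there re-submit the outcome, and freezing all rows but those of
`d` and `k`, would give a binary aggregator that is neither projection.
-/

open Function

theorem exists_forall_iff_mem_of_compl_of_disjoint {α : Type*} [Finite α] {P : Set α → Prop}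
    (hcompl : ∀ S, P Sᶜ ↔ ¬ P S) (hdisj : ∀ S T, Disjoint S T → P S → ¬ P T)
    (hunion : ∀ S T, Disjoint S T → ¬ P S → ¬ P T → ¬ P (S ∪ T)) :
    ∃ d, ∀ S, P S ↔ d ∈ S := by
  have mono : ∀ S V, P S → S ⊆ V → P V := fun S V hS hSV => by
    by_contra hV
    exact hdisj S Vᶜ (Set.disjoint_compl_right_iff_subset.2 hSV) hS ((hcompl V).2 hV)
  let F : Filter α :=
    { sets := {S | P S}
      univ_sets := by simpa using (hcompl ∅).2 fun h => hdisj ∅ ∅ (by simp) h h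
      sets_of_superset := fun hS hSV => mono _ _ hS hSV
      inter_sets := fun {S T} hS hT => by
        by_contra hST
        have hdiff : ¬ P (S \ T) := fun h =>
          (hcompl T).1 (mono _ _ h fun _ hx => hx.2) hT
        exact hunion _ _ Set.disjoint_sdiff_inter.symm hST hdiff
          (by rwa [Set.inter_union_sdiff]) }
  let U := Ultrafilter.ofComplNotMemIff F fun S => (hcompl S).not_left
  obtain ⟨d, hd⟩ := U.eq_pure_of_finite
  exact ⟨d, fun S => show S ∈ U ↔ _ by rw [hd, Ultrafilter.mem_pure]⟩

section Aggregation

variable {m : ℕ} {A : Fin m → Type*} {X : Set (∀ j, A j)}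

theorem Feasible.nontrivial (hX : Feasible X) (j : Fin m) : X.Nontrivial := by
  obtain ⟨z, hz, z', hz', hne⟩ := hX j
  exact ⟨z, hz, z', hz', fun h => hne (congrFun h j)⟩

def aggregate {n : ℕ} (f : ∀ j, (Fin n → A j) → A j) (xs : Fin n → ∀ j, A j) : ∀ j, A j :=
  fun j => f j (fun i => xs i j)

def minor {n k : ℕ} (f : ∀ j, (Fin n → A j) → A j) (π : Fin n → Fin k) :
    ∀ j, (Fin k → A j) → A j :=
  fun j t => f j (t ∘ π)

def AllAggregatorsDictatorial (X : Set (∀ j, A j)) (n : ℕ) : Prop :=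
  ∀ f : ∀ j, (Fin n → A j) → A j, IsAggregator X f → IsDictatorial X f

def HasMajorityAggregator (X : Set (∀ j, A j)) : Prop :=
  ∃ f : ∀ j, (Fin 3 → A j) → A j, IsAggregator X f ∧ ∀ j, IsMajorityOp (f j)

def HasMinorityAggregator (X : Set (∀ j, A j)) : Prop :=
  ∃ f : ∀ j, (Fin 3 → A j) → A j, IsAggregator X f ∧ ∀ j, IsMinorityOp (f j)

theorem col_vecCons {k : ℕ} (u : ∀ j, A j) (us : Fin k → ∀ j, A j) (j : Fin m) :
    (fun i => Matrix.vecCons u us i j) = Matrix.vecCons (u j) (fun i => us i j) := by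
  funext i
  cases i using Fin.cases <;> rfl

theorem col_vecEmpty (j : Fin m) : (fun i => (![] : Fin 0 → ∀ j, A j) i j) = ![] :=
  funext fun i => i.elim0

theorem col_update {n : ℕ} (xs : Fin n → ∀ j, A j) (k : Fin n) (w : ∀ j, A j) (j : Fin m) :
    (fun i => update xs k w i j) = update (fun i => xs i j) k (w j) :=
  funext fun i => apply_update (fun _ r => r j) xs k w i

theorem update_mem {n : ℕ} {xs : Fin n → ∀ j, A j} (hxs : ∀ i, xs i ∈ X) (k : Fin n)
    {w : ∀ j, A j} (hw : w ∈ X) (i : Fin n) : update xs k w i ∈ X :=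
  (forall_update_iff xs fun _ r => r ∈ X).2 ⟨hw, fun i _ => hxs i⟩ i

theorem vec2_mem {u v : ∀ j, A j} (hu : u ∈ X) (hv : v ∈ X) : ∀ i, ![u, v] i ∈ X := by
  intro i; fin_cases i <;> assumption

theorem vec3_mem {u v w : ∀ j, A j} (hu : u ∈ X) (hv : v ∈ X) (hw : w ∈ X) :
    ∀ i, ![u, v, w] i ∈ X := by
  intro i; fin_cases i <;> assumption

section Aggregators

variable {n : ℕ} {f : ∀ j, (Fin n → A j) → A j}

theorem isDictatorial_iff :
    IsDictatorial X f ↔ ∃ d, ∀ xs, (∀ i, xs i ∈ X) → aggregate f xs = xs d := by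
  simp only [IsDictatorial, aggregate, funext_iff]

theorem IsAggregator.aggregate_mem (hf : IsAggregator X f) {xs : Fin n → ∀ j, A j}
    (hxs : ∀ i, xs i ∈ X) : aggregate f xs ∈ X :=
  hf.2 xs hxs

theorem aggregate_minor {k : ℕ} (π : Fin n → Fin k) (ys : Fin k → ∀ j, A j) :
    aggregate (minor f π) ys = aggregate f (ys ∘ π) :=
  rfl

theorem IsAggregator.minor {k : ℕ} (hf : IsAggregator X f) (π : Fin n → Fin k) :
    IsAggregator X (minor f π) :=
  ⟨fun j t => let ⟨i, hi⟩ := hf.1 j (t ∘ π); ⟨π i, hi⟩,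
    fun _ hys => hf.aggregate_mem fun i => hys (π i)⟩

theorem aggregate_apply_congr (f : ∀ j, (Fin n → A j) → A j) {xs ys : Fin n → ∀ j, A j}
    {j : Fin m} (h : ∀ i, xs i j = ys i j) : aggregate f xs j = aggregate f ys j :=
  congrArg (f j) (funext h)

theorem aggregate_vec2 {f : ∀ j, (Fin 2 → A j) → A j} (u v : ∀ j, A j) (j : Fin m) :
    aggregate f ![u, v] j = f j ![u j, v j] := by
  simp only [aggregate, col_vecCons, col_vecEmpty]

end Aggregators

section Ternary

variable {G : ∀ j, (Fin 3 → A j) → A j}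

def IsMajorityOn (X : Set (∀ j, A j)) (G : ∀ j, (Fin 3 → A j) → A j) : Prop :=
  ∀ u ∈ X, ∀ v ∈ X,
    aggregate G ![u, u, v] = u ∧ aggregate G ![u, v, u] = u ∧ aggregate G ![v, u, u] = u

def IsMinorityOn (X : Set (∀ j, A j)) (G : ∀ j, (Fin 3 → A j) → A j) : Prop :=
  ∀ u ∈ X, ∀ v ∈ X,
    aggregate G ![u, u, v] = v ∧ aggregate G ![u, v, u] = v ∧ aggregate G ![v, u, u] = v

theorem aggregate_vec3 (a b c : ∀ j, A j) (j : Fin m) :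
    aggregate G ![a, b, c] j = G j ![a j, b j, c j] := by
  simp only [aggregate, col_vecCons, col_vecEmpty]

theorem IsMajorityOn.of_isMajorityOp (h : ∀ j, IsMajorityOp (G j)) : IsMajorityOn X G :=
  fun u _ v _ => by
    refine ⟨funext fun j => ?_, funext fun j => ?_, funext fun j => ?_⟩ <;>
      simp only [aggregate_vec3, h j (u j) (v j)]

theorem IsMinorityOn.of_isMinorityOp (h : ∀ j, IsMinorityOp (G j)) : IsMinorityOn X G :=
  fun u _ v _ => by
    refine ⟨funext fun j => ?_, funext fun j => ?_, funext fun j => ?_⟩ <;>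
      simp only [aggregate_vec3, h j (u j) (v j)]

theorem IsMajorityOn.not_isDictatorial (hX : X.Nontrivial) (h : IsMajorityOn X G) :
    ¬ IsDictatorial X G := by
  obtain ⟨u, hu, v, hv, huv⟩ := hX
  rw [isDictatorial_iff]
  rintro ⟨d, hd⟩
  fin_cases d
  · exact huv ((h u hu v hv).2.2.symm.trans (hd _ (vec3_mem hv hu hu)))
  · exact huv ((h u hu v hv).2.1.symm.trans (hd _ (vec3_mem hu hv hu)))
  · exact huv ((h u hu v hv).1.symm.trans (hd _ (vec3_mem hu hu hv)))

theorem IsMinorityOn.not_isDictatorial (hX : X.Nontrivial) (h : IsMinorityOn X G) :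
    ¬ IsDictatorial X G := by
  obtain ⟨u, hu, v, hv, huv⟩ := hX
  rw [isDictatorial_iff]
  rintro ⟨d, hd⟩
  fin_cases d
  · exact huv ((hd _ (vec3_mem hu hu hv)).symm.trans (h u hu v hv).1)
  · exact huv ((hd _ (vec3_mem hu hu hv)).symm.trans (h u hu v hv).1)
  · exact huv ((hd _ (vec3_mem hv hu hu)).symm.trans (h u hu v hv).2.2)

theorem hasMajorityAggregator_of_isMajorityOn (hG : IsAggregator X G) (h : IsMajorityOn X G) :
    HasMajorityAggregator X := by
  classical
  refine ⟨fun j t => if t 0 = t 1 ∨ t 0 = t 2 then t 0 else if t 1 = t 2 then t 1 else G j t,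
    ⟨fun j t => ?_, fun xs hxs => ?_⟩, fun j x y => ?_⟩
  · dsimp only
    split_ifs
    exacts [⟨0, rfl⟩, ⟨1, rfl⟩, hG.1 j t]
  · convert hG.aggregate_mem hxs using 1
    funext j
    dsimp only
    split_ifs with h01 h12
    · rcases h01 with h01 | h02
      · rw [aggregate_apply_congr G (ys := ![xs 0, xs 0, xs 2])
          (by intro i; fin_cases i; exacts [rfl, h01.symm, rfl]), (h _ (hxs 0) _ (hxs 2)).1]
      · rw [aggregate_apply_congr G (ys := ![xs 0, xs 1, xs 0])
          (by intro i; fin_cases i; exacts [rfl, rfl, h02.symm]), (h _ (hxs 0) _ (hxs 1)).2.1]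
    · rw [aggregate_apply_congr G (ys := ![xs 0, xs 1, xs 1])
        (by intro i; fin_cases i; exacts [rfl, rfl, h12.symm]), (h _ (hxs 1) _ (hxs 0)).2.2]
    · rfl
  · by_cases hxy : y = x <;> simp [hxy]

theorem hasMinorityAggregator_of_isMinorityOn (hG : IsAggregator X G) (h : IsMinorityOn X G) :
    HasMinorityAggregator X := by
  classical
  refine ⟨fun j t => if t 0 = t 1 then t 2 else if t 0 = t 2 then t 1
      else if t 1 = t 2 then t 0 else G j t, ⟨fun j t => ?_, fun xs hxs => ?_⟩, fun j x y => ?_⟩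
  · dsimp only
    split_ifs
    exacts [⟨2, rfl⟩, ⟨1, rfl⟩, ⟨0, rfl⟩, hG.1 j t]
  · convert hG.aggregate_mem hxs using 1
    funext j
    dsimp only
    split_ifs with h01 h02 h12
    · rw [aggregate_apply_congr G (ys := ![xs 0, xs 0, xs 2])
        (by intro i; fin_cases i; exacts [rfl, h01.symm, rfl]), (h _ (hxs 0) _ (hxs 2)).1]
    · rw [aggregate_apply_congr G (ys := ![xs 0, xs 1, xs 0])
        (by intro i; fin_cases i; exacts [rfl, rfl, h02.symm]), (h _ (hxs 0) _ (hxs 1)).2.1]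
    · rw [aggregate_apply_congr G (ys := ![xs 0, xs 1, xs 1])
        (by intro i; fin_cases i; exacts [rfl, rfl, h12.symm]), (h _ (hxs 1) _ (hxs 0)).2.2]
    · rfl
  · by_cases hxy : y = x <;> simp [hxy]

/-- The witness is `G (x, y, G (x, y, z))`. -/
theorem hasMajorityAggregator_of_uuv_pattern (hG : IsAggregator X G)
    (h : ∀ u ∈ X, ∀ v ∈ X,
      aggregate G ![u, u, v] = u ∧ aggregate G ![u, v, u] = v ∧ aggregate G ![v, u, u] = v) :
    HasMajorityAggregator X := by
  let G' : ∀ j, (Fin 3 → A j) → A j := fun j t => G j ![t 0, t 1, G j t]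
  have hG' : ∀ xs, aggregate G' xs = aggregate G ![xs 0, xs 1, aggregate G xs] := fun xs =>
    funext fun j => by rw [aggregate_vec3]; rfl
  refine hasMajorityAggregator_of_isMajorityOn (G := G') ⟨fun j t => ?_, fun xs hxs => ?_⟩
    fun u hu v hv => ?_
  · obtain ⟨i, hi⟩ := hG.1 j ![t 0, t 1, G j t]
    fin_cases i
    exacts [⟨0, hi⟩, ⟨1, hi⟩, (hG.1 j t).imp fun _ hi' => hi.trans hi']
  · change aggregate G' xs ∈ X
    rw [hG']
    exact hG.aggregate_mem (vec3_mem (hxs 0) (hxs 1) (hG.aggregate_mem hxs))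
  · simp only [hG', Matrix.cons_val_zero, Matrix.cons_val_one]
    rw [(h u hu v hv).1, (h u hu v hv).2.1, (h u hu v hv).2.2]
    exact ⟨(h u hu u hu).1, (h v hv u hu).2.2, (h v hv u hu).2.1⟩

end Ternary

section Decisive

variable {n : ℕ} {f : ∀ j, (Fin n → A j) → A j} {S T : Set (Fin n)}

open Classical in
noncomputable def blend (S : Set (Fin n)) (u v : ∀ j, A j) : Fin n → ∀ j, A j :=
  fun i => if i ∈ S then u else v

def Decisive (X : Set (∀ j, A j)) (f : ∀ j, (Fin n → A j) → A j) (S : Set (Fin n)) : Prop :=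
  ∀ u ∈ X, ∀ v ∈ X, aggregate f (blend S u v) = u

theorem blend_compl (u v : ∀ j, A j) : blend Sᶜ u v = blend S v u := by
  funext i
  by_cases hi : i ∈ S <;> simp [blend, hi]

theorem Decisive.aggregate_blend_of_compl (h : Decisive X f Sᶜ) {u v : ∀ j, A j} (hu : u ∈ X)
    (hv : v ∈ X) : aggregate f (blend S u v) = v := by
  rw [← blend_compl]
  exact h v hv u hu

theorem decisive_or_decisive_compl (h2 : AllAggregatorsDictatorial X 2) (hf : IsAggregator X f)
    (S : Set (Fin n)) : Decisive X f S ∨ Decisive X f Sᶜ := by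
  classical
  let χ : Fin n → Fin 2 := fun i => if i ∈ S then 0 else 1
  have hχ : ∀ u v : ∀ j, A j, ![u, v] ∘ χ = blend S u v := fun u v => funext fun i => by
    by_cases hi : i ∈ S <;> simp [χ, blend, hi]
  obtain ⟨d, hd⟩ := isDictatorial_iff.1 (h2 _ (hf.minor χ))
  fin_cases d
  · exact .inl fun u hu v hv => by
      rw [← hχ, ← aggregate_minor]
      exact hd _ (vec2_mem hu hv)
  · exact .inr fun u hu v hv => by
      rw [blend_compl, ← hχ, ← aggregate_minor]
      exact hd _ (vec2_mem hv hu)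

theorem decisive_compl_iff (hX : X.Nontrivial) (h2 : AllAggregatorsDictatorial X 2)
    (hf : IsAggregator X f) : Decisive X f Sᶜ ↔ ¬ Decisive X f S := by
  refine ⟨fun hc h => ?_, (decisive_or_decisive_compl h2 hf S).resolve_left⟩
  obtain ⟨u, hu, v, hv, huv⟩ := hX
  exact huv ((h u hu v hv).symm.trans (hc.aggregate_blend_of_compl hu hv))

open Classical in
noncomputable def tri (S T : Set (Fin n)) : Fin n → Fin 3 :=
  fun i => if i ∈ S then 0 else if i ∈ T then 1 else 2

theorem aggregate_minor_tri (hST : Disjoint S T) (u v : ∀ j, A j) :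
    aggregate (minor f (tri S T)) ![u, u, v] = aggregate f (blend (S ∪ T) u v) ∧
    aggregate (minor f (tri S T)) ![u, v, u] = aggregate f (blend T v u) ∧
    aggregate (minor f (tri S T)) ![v, u, u] = aggregate f (blend S v u) := by
  simp only [aggregate_minor]
  refine ⟨congrArg _ (funext fun i => ?_), congrArg _ (funext fun i => ?_),
    congrArg _ (funext fun i => ?_)⟩
  all_goals
    by_cases hS : i ∈ S
    · simp [tri, blend, hS, Set.disjoint_left.1 hST hS]
    · by_cases hT : i ∈ T <;> simp [tri, blend, hS, hT]

theorem hasMajorityAggregator_or_hasMinorityAggregator_of_disjoint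
    (h2 : AllAggregatorsDictatorial X 2) (hf : IsAggregator X f) (hST : Disjoint S T)
    (hS : Decisive X f S) (hT : Decisive X f T) :
    HasMajorityAggregator X ∨ HasMinorityAggregator X := by
  have hG := hf.minor (tri S T)
  rcases decisive_or_decisive_compl h2 hf (S ∪ T) with hU | hU
  · refine .inl (hasMajorityAggregator_of_uuv_pattern hG fun u hu v hv => ?_)
    obtain ⟨huuv, huvu, hvuu⟩ := aggregate_minor_tri (f := f) hST u v
    exact ⟨huuv.trans (hU u hu v hv), huvu.trans (hT v hv u hu), hvuu.trans (hS v hv u hu)⟩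
  · refine .inr (hasMinorityAggregator_of_isMinorityOn hG fun u hu v hv => ?_)
    obtain ⟨huuv, huvu, hvuu⟩ := aggregate_minor_tri (f := f) hST u v
    exact ⟨huuv.trans (hU.aggregate_blend_of_compl hu hv), huvu.trans (hT v hv u hu),
      hvuu.trans (hS v hv u hu)⟩

theorem hasMajorityAggregator_of_decisive_union (hf : IsAggregator X f) (hST : Disjoint S T)
    (hU : Decisive X f (S ∪ T)) (hS : Decisive X f Sᶜ) (hT : Decisive X f Tᶜ) :
    HasMajorityAggregator X :=
  hasMajorityAggregator_of_isMajorityOn (hf.minor (tri S T)) fun u hu v hv => by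
    obtain ⟨huuv, huvu, hvuu⟩ := aggregate_minor_tri (f := f) hST u v
    exact ⟨huuv.trans (hU u hu v hv), huvu.trans (hT.aggregate_blend_of_compl hv hu),
      hvuu.trans (hS.aggregate_blend_of_compl hv hu)⟩

theorem exists_decisive_iff_mem (hX : X.Nontrivial) (h2 : AllAggregatorsDictatorial X 2)
    (hmaj : ¬ HasMajorityAggregator X) (hmin : ¬ HasMinorityAggregator X)
    (hf : IsAggregator X f) : ∃ d, ∀ S, Decisive X f S ↔ d ∈ S :=
  exists_forall_iff_mem_of_compl_of_disjoint (fun _ => decisive_compl_iff hX h2 hf)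
    (fun _ _ hST hS hT =>
      (hasMajorityAggregator_or_hasMinorityAggregator_of_disjoint h2 hf hST hS hT).elim
        hmaj hmin)
    (fun _ _ hST hS hT hU => hmaj (hasMajorityAggregator_of_decisive_union hf hST hU
      ((decisive_compl_iff hX h2 hf).2 hS) ((decisive_compl_iff hX h2 hf).2 hT)))

end Decisive

theorem exists_factor_fin_of_not_injective {β : Type*} {N : ℕ} {xs : Fin (N + 1) → β}
    (h : ¬ Injective xs) :
    ∃ (e : Fin (N + 1) → Fin N) (s : Fin N → Fin (N + 1)), xs ∘ s ∘ e = xs := by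
  obtain ⟨p, q, hpq, hne⟩ : ∃ p q, xs p = xs q ∧ p ≠ q := by simpa [Injective] using h
  have hsurj : ∀ i, i ≠ q → ∃ t, q.succAbove t = i := fun i hi => Fin.exists_succAbove_eq hi
  have : Nonempty (Fin N) := ⟨(hsurj p hne).choose⟩
  refine ⟨invFun q.succAbove ∘ fun i => if i = q then p else i, q.succAbove, funext fun i => ?_⟩
  by_cases hi : i = q
  · simp [hi, invFun_eq (hsurj p hne), hpq]
  · simp [hi, invFun_eq (hsurj i hi)]

theorem aggregate_eq_of_not_injective {N : ℕ} {f : ∀ j, (Fin (N + 1) → A j) → A j}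
    (hN : AllAggregatorsDictatorial X N) (hf : IsAggregator X f) {d : Fin (N + 1)}
    (hd : ∀ S, Decisive X f S → d ∈ S) {xs : Fin (N + 1) → ∀ j, A j} (hxs : ∀ i, xs i ∈ X)
    (hinj : ¬ Injective xs) : aggregate f xs = xs d := by
  classical
  obtain ⟨e, s, hes⟩ := exists_factor_fin_of_not_injective hinj
  obtain ⟨δ, hδ⟩ := isDictatorial_iff.1 (hN _ (hf.minor e))
  have hed : e d = δ := hd (e ⁻¹' {δ}) fun u hu v hv => by
    have hblend : blend (e ⁻¹' {δ}) u v = (fun τ => if τ = δ then u else v) ∘ e := by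
      funext i
      simp [blend]
    rw [hblend, ← aggregate_minor, hδ _ fun τ => by split_ifs <;> assumption, if_pos rfl]
  calc aggregate f xs = aggregate (minor f e) (xs ∘ s) := congrArg (aggregate f) hes.symm
    _ = xs d := by rw [hδ (xs ∘ s) fun τ => hxs _, ← hed]; exact congrFun hes d

section Semiprojection

variable {n : ℕ} {f : ∀ j, (Fin n → A j) → A j}

def revote (f : ∀ j, (Fin n → A j) → A j) (k : Fin n) : ∀ j, (Fin n → A j) → A j :=
  fun j t => f j (update t k (f j t))

variable {d k : Fin n}

theorem aggregate_revote (ws : Fin n → ∀ j, A j) :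
    aggregate (revote f k) ws = aggregate f (update ws k (aggregate f ws)) := by
  funext j
  simp only [aggregate, revote, col_update]

theorem aggregate_revote_apply_of_eq {ws : Fin n → ∀ j, A j} {j : Fin m}
    (h : aggregate f ws j = ws k j) : aggregate (revote f k) ws j = ws k j := by
  simp only [aggregate, revote] at h ⊢
  rw [h, update_eq_self, h]

theorem aggregate_revote_apply_mem_pair (hf : IsAggregator X f)
    (hrep : ∀ xs, (∀ i, xs i ∈ X) → ¬ Injective xs → aggregate f xs = xs d) (hkd : k ≠ d)
    {ws : Fin n → ∀ j, A j} (hws : ∀ i, ws i ∈ X) (j : Fin m) :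
    aggregate (revote f k) ws j = ws d j ∨ aggregate (revote f k) ws j = ws k j := by
  obtain ⟨l, hl⟩ := hf.1 j fun i => ws i j
  by_cases hlk : l = k
  · subst hlk
    exact .inr (aggregate_revote_apply_of_eq hl)
  · refine .inl ?_
    have hnotinj : ¬ Injective (update ws k (ws l)) := fun hinj => hlk (hinj (by simp [hlk]))
    have := congrFun (hrep _ (update_mem hws k (hws l)) hnotinj) j
    simp only [aggregate, revote, col_update] at this ⊢
    rw [hl, this, update_of_ne hkd.symm]

theorem exists_binary_aggregator_of_revote (hf : IsAggregator X f)
    (hrep : ∀ xs, (∀ i, xs i ∈ X) → ¬ Injective xs → aggregate f xs = xs d) (hkd : k ≠ d)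
    {xs : Fin n → ∀ j, A j} (hxs : ∀ i, xs i ∈ X) :
    ∃ g : ∀ j, (Fin 2 → A j) → A j, IsAggregator X g ∧ ∀ u ∈ X, ∀ v ∈ X,
      aggregate g ![u, v] = aggregate (revote f k) (update (update xs d u) k v) := by
  classical
  -- on profiles from `X` this is `revote f k` with all rows but those of `d` and `k` frozen
  -- (`aggregate_revote_apply_mem_pair`); the `if` only makes it conservative everywhere
  let g : ∀ j, (Fin 2 → A j) → A j := fun j t =>
    if revote f k j (update (update (fun i => xs i j) d (t 0)) k (t 1)) = t 1 then t 1 else t 0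
  have hg : ∀ u ∈ X, ∀ v ∈ X,
      aggregate g ![u, v] = aggregate (revote f k) (update (update xs d u) k v) := by
    intro u hu v hv
    funext j
    have hws := update_mem (update_mem hxs d hu) k hv
    rw [aggregate_vec2]
    simp only [g, Matrix.cons_val_zero, Matrix.cons_val_one, ← col_update]
    change ite (aggregate (revote f k) _ j = v j) _ _ = aggregate (revote f k) _ j
    rcases aggregate_revote_apply_mem_pair hf hrep hkd hws j with h | h <;> rw [h]
    · simp only [update_of_ne hkd.symm, update_self]
      split_ifs with huv
      exacts [huv.symm, rfl]
    · simp
  refine ⟨g, ⟨fun j t => ?_, fun ts hts => ?_⟩, hg⟩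
  · by_cases h : revote f k j (update (update (fun i => xs i j) d (t 0)) k (t 1)) = t 1
    · exact ⟨1, if_pos h⟩
    · exact ⟨0, if_neg h⟩
  · have hts' : ts = ![ts 0, ts 1] := by
      funext i
      fin_cases i <;> rfl
    change aggregate g ts ∈ X
    rw [hts', hg _ (hts 0) _ (hts 1), aggregate_revote]
    have hws := update_mem (update_mem hxs d (hts 0)) k (hts 1)
    exact hf.aggregate_mem (update_mem hws k (hf.aggregate_mem hws))

theorem isDictatorial_of_aggregate_eq_of_not_injective (hX : X.Nontrivial)
    (h2 : AllAggregatorsDictatorial X 2) (hn : 3 ≤ n) (hf : IsAggregator X f)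
    (hrep : ∀ xs, (∀ i, xs i ∈ X) → ¬ Injective xs → aggregate f xs = xs d) :
    IsDictatorial X f := by
  refine isDictatorial_iff.2 ⟨d, fun xs hxs => ?_⟩
  by_contra hne
  obtain ⟨j₀, hj₀⟩ := Function.ne_iff.1 hne
  obtain ⟨k, hk⟩ := hf.1 j₀ fun i => xs i j₀
  have hkd : k ≠ d := by
    rintro rfl
    exact hj₀ hk
  obtain ⟨g, hg, hgval⟩ := exists_binary_aggregator_of_revote hf hrep hkd hxs
  obtain ⟨d₂, hd₂⟩ := isDictatorial_iff.1 (h2 g hg)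
  fin_cases d₂
  · have h := congrFun ((hgval _ (hxs d) _ (hxs k)).symm.trans
      (hd₂ _ (vec2_mem (hxs d) (hxs k)))) j₀
    simp only [update_eq_self, aggregate_revote_apply_of_eq hk] at h
    exact hj₀ (hk.trans h)
  · obtain ⟨l, hld, hlk⟩ := Fin.exists_ne_and_ne_of_two_lt d k (by omega)
    have hconst : ∀ w ∈ X, w = xs l := fun w hw => by
      set ws := update (update xs d w) k (xs l)
      have hws : ∀ i, ws i ∈ X := update_mem (update_mem hxs d hw) k (hxs l)
      have hwsd : ws d = w := by simp [ws, hkd.symm]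
      have hws_ne : ¬ Injective ws := fun hinj => hlk (hinj (by simp [ws, hld, hlk]))
      have hwsk_ne : ¬ Injective (update ws k w) := fun hinj =>
        hkd (hinj (by simp [hkd.symm, hwsd]))
      calc w = aggregate (revote f k) ws := by
            rw [aggregate_revote, hrep ws hws hws_ne, hwsd,
              hrep _ (update_mem hws k hw) hwsk_ne, update_of_ne hkd.symm, hwsd]
        _ = aggregate g ![w, xs l] := (hgval w hw _ (hxs l)).symm
        _ = xs l := hd₂ _ (vec2_mem hw (hxs l))
    obtain ⟨u, hu, v, hv, huv⟩ := hX
    exact huv ((hconst u hu).trans (hconst v hv).symm)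

end Semiprojection

theorem allAggregatorsDictatorial_of_two (hX : X.Nontrivial) (h2 : AllAggregatorsDictatorial X 2)
    (hmaj : ¬ HasMajorityAggregator X) (hmin : ¬ HasMinorityAggregator X) {n : ℕ}
    (hn : 2 ≤ n) : AllAggregatorsDictatorial X n := by
  induction n, hn using Nat.le_induction with
  | base => exact h2
  | succ N hN ih =>
    intro f hf
    obtain ⟨d, hd⟩ := exists_decisive_iff_mem hX h2 hmaj hmin hf
    exact isDictatorial_of_aggregate_eq_of_not_injective hX h2 (by omega) hf
      fun xs hxs => aggregate_eq_of_not_injective ih hf (fun S => (hd S).1) hxs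

end Aggregation

theorem statement_18_general {m : ℕ} (hm : 1 ≤ m) {A : Fin m → Type*}
    (X : Set (∀ j, A j)) (hX : Feasible X) :
    IsPossibilityDomain X ↔
      ((∃ f : ∀ j, (Fin 2 → A j) → A j, IsAggregator X f ∧ ¬ IsDictatorial X f) ∨
       (∃ f : ∀ j, (Fin 3 → A j) → A j, IsAggregator X f ∧ ∀ j, IsMajorityOp (f j)) ∨
       (∃ f : ∀ j, (Fin 3 → A j) → A j, IsAggregator X f ∧ ∀ j, IsMinorityOp (f j))) := by
  have hXnt := hX.nontrivial ⟨0, hm⟩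
  constructor
  · rintro ⟨n, hn, f, hf, hnd⟩
    by_contra h
    simp only [not_or] at h
    obtain ⟨hbin, hmaj, hmin⟩ := h
    have h2 : AllAggregatorsDictatorial X 2 := fun g hg =>
      by_contra fun hnd => hbin ⟨g, hg, hnd⟩
    exact hnd (allAggregatorsDictatorial_of_two hXnt h2 hmaj hmin hn f hf)
  · rintro (⟨f, hf, hnd⟩ | ⟨f, hf, hmaj⟩ | ⟨f, hf, hmin⟩)
    · exact ⟨2, le_rfl, f, hf, hnd⟩
    · exact ⟨3, by omega, f, hf, (IsMajorityOn.of_isMajorityOp hmaj).not_isDictatorial hXnt⟩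
    · exact ⟨3, by omega, f, hf, (IsMinorityOn.of_isMinorityOp hmin).not_isDictatorial hXnt⟩

/-- `X` is a possibility domain iff `X` admits a binary non-dictatorial aggregator,
or a majority aggregator, or a minority aggregator. -/
theorem statement_18 {m : ℕ} (hm : 1 ≤ m) {A : Fin m → Type*} [∀ j, Fintype (A j)]
    (hA : ∀ j, 2 ≤ Fintype.card (A j))
    (X : Set (∀ j, A j)) (hX : Feasible X) :
    IsPossibilityDomain X ↔
      ((∃ f : ∀ j, (Fin 2 → A j) → A j, IsAggregator X f ∧ ¬ IsDictatorial X f) ∨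
       (∃ f : ∀ j, (Fin 3 → A j) → A j, IsAggregator X f ∧ ∀ j, IsMajorityOp (f j)) ∨
       (∃ f : ∀ j, (Fin 3 → A j) → A j, IsAggregator X f ∧ ∀ j, IsMinorityOp (f j))) :=
  statement_18_general hm X hX
end
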